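/- arXiv:1703.10268 — 6 statements merged into one kernel-verified Lean document; each statement's English description precedes it below -/
import Mathlib

section
/- If G is a nonhamiltonian graph on n ≥ 3 vertices, then the number of edges of G is at most binomial(n-1, 2) + 1. -/
/-!
A graph satisfying Ore's condition (`deg u + deg v ≥ n` for all non-adjacent `u ≠ v`) is
Hamiltonian: add the missing edges one at a time until the graph is complete. If `G ⊔ uv` has a
Hamiltonian cycle but `G` does not, the cycle runs through `uv`, so `G` has a Hamiltonian path
`u = p₀, …, pₙ₋₁ = v`. Since `deg u + deg v ≥ n`, pigeonhole gives `j` with `u ~ pⱼ₊₁` and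
`v ~ pⱼ`, and `p₀ … pⱼ pₙ₋₁ … pⱼ₊₁` is a Hamiltonian cycle of `G`.

A graph with at least `C(n-1, 2) + 2` edges satisfies Ore's condition: at most `C(n-2, 2)` of its
edges avoid two given vertices `u, v`, so `deg u + deg v ≥ C(n-1, 2) + 2 - C(n-2, 2) = n`.
-/

open Finset

namespace SimpleGraph

variable {V : Type*} {G : SimpleGraph V}

namespace Walk

variable {u v : V}

theorem edges_subset_edgeSet_of_sup_edge {x y : V} {p : (G ⊔ edge u v).Walk x y}
    (h : s(u, v) ∉ p.edges) : ∀ e ∈ p.edges, e ∈ G.edgeSet := by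
  intro e he
  have hsup := p.edges_subset_edgeSet he
  rw [edgeSet_sup, Set.mem_union] at hsup
  exact hsup.resolve_right fun huv => h (Set.mem_singleton_iff.mp (edgeSet_edge_subset huv) ▸ he)

variable [DecidableEq V]

theorem IsHamiltonianCycle.exists_isHamiltonian_of_snd_eq {c : (G ⊔ edge u v).Walk u u}
    (hc : c.IsHamiltonianCycle) (hv : c.snd = v) : ∃ p : G.Walk u v, p.IsHamiltonian := by
  have hcycle := hc.isCycle
  rw [← c.cons_tail_eq hcycle.not_nil, cons_isCycle_iff] at hcycle
  have hq : s(u, v) ∉ (c.tail.copy hv rfl).edges := by simpa [← hv] using hcycle.2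
  refine ⟨((c.tail.copy hv rfl).transfer G (edges_subset_edgeSet_of_sup_edge hq)).reverse,
    fun w => ?_⟩
  rw [support_reverse, List.count_reverse, support_transfer, support_copy]
  exact hc.isHamiltonian_tail w

end Walk

variable [Fintype V]

def OreCondition (G : SimpleGraph V) [DecidableRel G.Adj] : Prop :=
  ∀ u v, u ≠ v → ¬ G.Adj u v → Fintype.card V ≤ G.degree u + G.degree v

theorem OreCondition.mono {H : SimpleGraph V} [DecidableRel G.Adj] [DecidableRel H.Adj]
    (hGH : G ≤ H) (hG : G.OreCondition) : H.OreCondition := fun u v huv hnadj =>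
  (hG u v huv fun h => hnadj (hGH h)).trans
    (add_le_add (degree_le_of_le hGH) (degree_le_of_le hGH))

variable [DecidableEq V]

theorem isHamiltonian_of_isChain {l : List V} (hl : l ≠ []) (hnodup : l.Nodup)
    (hmem : ∀ v, v ∈ l) (h3 : 3 ≤ l.length) (hchain : l.IsChain G.Adj)
    (hclose : G.Adj (l.getLast hl) (l.head hl)) : G.IsHamiltonian := by
  intro _
  have hcard : Fintype.card V = l.length := by
    simpa using Fintype.card_congr (hnodup.getEquivOfForallMemList l hmem).symm
  refine ⟨_, .cons hclose (.ofSupport l hl hchain),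
    Walk.isHamiltonianCycle_iff_isCycle_and_length_eq.mpr ⟨?_, ?_⟩⟩
  · rw [Walk.isCycle_iff_isPath_tail_and_le_length, Walk.length_cons, Walk.length_ofSupport]
    exact ⟨by simpa [Walk.isPath_def] using hnodup, by omega⟩
  · rw [Walk.length_cons, Walk.length_ofSupport]
    omega

theorem isHamiltonian_top (h3 : 3 ≤ Fintype.card V) : (⊤ : SimpleGraph V).IsHamiltonian := by
  have hlen : (univ : Finset V).toList.length = Fintype.card V := by simp
  have hne : (univ : Finset V).toList ≠ [] := List.ne_nil_of_length_pos (by omega)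
  refine isHamiltonian_of_isChain hne (nodup_toList _) (by simp) (by omega)
    (nodup_toList _).isChain ?_
  rw [top_adj, List.getLast_eq_getElem, List.head_eq_getElem, Ne,
    (nodup_toList _).getElem_inj_iff]
  omega

namespace Walk

variable {u v : V}

theorem IsHamiltonian.card_filter_adj_getVert [DecidableRel G.Adj] {p : G.Walk u v}
    (hp : p.IsHamiltonian) (w : V) :
    #{i ∈ range (p.length + 1) | G.Adj w (p.getVert i)} = G.degree w := by
  rw [← card_neighborFinset_eq_degree]
  refine card_nbij p.getVert (fun i hi => by simpa using (mem_filter.mp hi).2) ?_ ?_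
  · intro i hi j hj hij
    simp only [coe_filter, mem_range, Set.mem_ofPred_eq] at hi hj
    exact hp.isPath.getVert_injOn (show i ≤ p.length by omega) (show j ≤ p.length by omega) hij
  · intro x hx
    obtain ⟨k, rfl⟩ := hp.getVert_surjective x
    have hmin : p.getVert (min k p.length) = p.getVert k := by
      rcases le_total k p.length with h | h
      · rw [min_eq_left h]
      · rw [min_eq_right h, p.getVert_length, p.getVert_of_length_le h]
    refine ⟨min k p.length, ?_, hmin⟩
    simp only [coe_filter, mem_range, Set.mem_ofPred_eq, hmin]
    exact ⟨by omega, by simpa using hx⟩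

theorem IsHamiltonian.exists_adj_getVert_succ_adj_getVert [DecidableRel G.Adj] {p : G.Walk u v}
    (hp : p.IsHamiltonian) (hdeg : Fintype.card V ≤ G.degree u + G.degree v) :
    ∃ j < p.length, G.Adj u (p.getVert (j + 1)) ∧ G.Adj v (p.getVert j) := by
  have hlen : p.length + 1 = Fintype.card V := by
    rw [hp.length_eq, Nat.sub_add_cancel (Fintype.card_pos_iff.mpr ⟨u⟩)]
  have hu : {i ∈ range (p.length + 1) | G.Adj u (p.getVert i)} ⊆ Icc 1 p.length := by
    intro i hi
    simp only [mem_filter, mem_range] at hi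
    have : i ≠ 0 := by rintro rfl; simp at hi
    rw [mem_Icc]
    omega
  have hv : {i ∈ range (p.length + 1) | G.Adj v (p.getVert i)}.map (addRightEmbedding 1) ⊆
      Icc 1 p.length := by
    intro i hi
    simp only [mem_map, mem_filter, mem_range] at hi
    obtain ⟨k, ⟨hk, hadj⟩, rfl⟩ := hi
    have : k ≠ p.length := by rintro rfl; simp at hadj
    rw [addRightEmbedding_apply, mem_Icc]
    omega
  obtain ⟨i, hi⟩ := inter_nonempty_of_card_lt_card_add_card hu hv (by
    rw [card_map, hp.card_filter_adj_getVert, hp.card_filter_adj_getVert, Nat.card_Icc]; omega)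
  simp only [mem_inter, mem_filter, mem_map, mem_range] at hi
  obtain ⟨⟨hk, hku⟩, k, ⟨-, hkv⟩, rfl⟩ := hi
  exact ⟨k, by simpa using hk, by simpa using hku, hkv⟩

theorem IsHamiltonian.isHamiltonian_of_card_le_degree_add_degree [DecidableRel G.Adj]
    {p : G.Walk u v} (hp : p.IsHamiltonian) (h3 : 3 ≤ Fintype.card V)
    (hdeg : Fintype.card V ≤ G.degree u + G.degree v) : G.IsHamiltonian := by
  obtain ⟨j, hj, hju, hjv⟩ := hp.exists_adj_getVert_succ_adj_getVert hdeg
  set s := p.support with hs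
  have hslen : s.length = p.length + 1 := p.length_support
  have hperm : (s.take (j + 1) ++ (s.drop (j + 1)).reverse).Perm s := by
    simpa using ((List.reverse_perm (s.drop (j + 1))).append_left (s.take (j + 1)))
  have hne : s.take (j + 1) ++ (s.drop (j + 1)).reverse ≠ [] :=
    List.ne_nil_of_length_pos (by rw [hperm.length_eq]; omega)
  refine isHamiltonian_of_isChain hne (hperm.nodup_iff.mpr hp.isPath.support_nodup)
    (fun w => hperm.mem_iff.mpr (hp.mem_support w))
    (by rw [hperm.length_eq, hp.length_support]; exact h3) ?_ ?_
  · rw [List.isChain_append]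
    refine ⟨p.isChain_adj_support.take _, ?_, ?_⟩
    · rw [List.isChain_reverse]
      exact (p.isChain_adj_support.drop _).imp (fun _ _ h => h.symm)
    · have hsj : s[j]? = some (p.getVert j) := (p.getVert_eq_support_getElem? hj.le).symm
      have hlast : s.getLast? = some v := by
        rw [List.getLast?_eq_some_getLast (by simp [s]), getLast_support]
      simp only [List.getLast?_take, List.head?_reverse, List.getLast?_drop, hlast]
      simp [hsj, hjv.symm]
  · have hdrop : (s.drop (j + 1)).reverse ≠ [] := by
      rw [Ne, List.reverse_eq_nil_iff, List.drop_eq_nil_iff]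
      omega
    rw [List.getLast_append_of_ne_nil _ hdrop, List.getLast_reverse,
      List.head_append_of_ne_nil (by simp [s])]
    simp only [List.head_drop, List.head_take, hs, head_support, support_getElem_eq_getVert]
    exact hju.symm

theorem IsHamiltonianCycle.reverse {c : G.Walk u u} (hc : c.IsHamiltonianCycle) :
    c.reverse.IsHamiltonianCycle :=
  isHamiltonianCycle_iff_isCycle_and_length_eq.mpr ⟨hc.isCycle.reverse, by simp [hc.length_eq]⟩

end Walk

open Walk in
theorem exists_isHamiltonian_walk_of_isHamiltonian_sup_edge {u v : V} (huv : u ≠ v)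
    (hG : ¬ G.IsHamiltonian) (hH : (G ⊔ edge u v).IsHamiltonian) :
    ∃ p : G.Walk u v, p.IsHamiltonian := by
  have : Nontrivial V := ⟨u, v, huv⟩
  obtain ⟨c, hc⟩ := hH.exists_isHamiltonianCycle u
  have hmem : s(u, v) ∈ c.edges := by
    by_contra h
    exact hG fun _ => ⟨u, c.transfer G (edges_subset_edgeSet_of_sup_edge h),
      isHamiltonianCycle_iff_isCycle_and_length_eq.mpr
        ⟨hc.isCycle.transfer _, by simp [hc.length_eq]⟩⟩
  -- the only edges of a cycle at its base vertex are its first and its last edge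
  have hv : v ∈ ({c.snd, c.penultimate} : Set V) := by
    rw [← hc.isCycle.neighborSet_toSubgraph_endpoint, Subgraph.mem_neighborSet,
      ← Subgraph.mem_edgeSet, mem_edges_toSubgraph]
    exact hmem
  rcases hv with hv | hv
  · exact hc.exists_isHamiltonian_of_snd_eq hv.symm
  · refine hc.reverse.exists_isHamiltonian_of_snd_eq ?_
    rw [snd_reverse]
    exact (Set.mem_singleton_iff.mp hv).symm

theorem OreCondition.isHamiltonian [DecidableRel G.Adj] (h3 : 3 ≤ Fintype.card V)
    (hG : G.OreCondition) : G.IsHamiltonian := by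
  refine WellFoundedGT.induction (motive := fun G : SimpleGraph V =>
    ∀ [DecidableRel G.Adj], G.OreCondition → G.IsHamiltonian) G (fun G ih _ hG => ?_) hG
  by_cases htop : G = ⊤
  · subst htop
    exact isHamiltonian_top h3
  obtain ⟨u, v, huv, hnadj⟩ : ∃ u v, u ≠ v ∧ ¬ G.Adj u v := by
    by_contra! h
    exact htop (eq_top_iff.mpr fun x y hxy => h x y hxy)
  by_contra hnot
  have hH : (G ⊔ edge u v).IsHamiltonian :=
    ih _ (lt_sup_edge _ _ _ huv hnadj) (hG.mono le_sup_left)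
  obtain ⟨p, hp⟩ := exists_isHamiltonian_walk_of_isHamiltonian_sup_edge huv hnot hH
  exact hnot (hp.isHamiltonian_of_card_le_degree_add_degree h3 (hG u v huv hnadj))

theorem card_edgeFinset_le_sum_degree_add_choose [DecidableRel G.Adj] (S : Finset V) :
    #G.edgeFinset ≤ ∑ x ∈ S, G.degree x + (Fintype.card V - #S).choose 2 := by
  have hsub :
      G.edgeFinset ⊆ S.biUnion (G.incidenceFinset ·) ∪ (G.edgeFinset ∩ Sᶜ.sym2) := by
    intro e he
    by_cases h : ∃ x ∈ S, x ∈ e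
    · obtain ⟨x, hx, hxe⟩ := h
      refine mem_union_left _ (mem_biUnion.mpr ⟨x, hx, ?_⟩)
      exact (mem_incidenceFinset ..).mpr ⟨mem_edgeFinset.mp he, hxe⟩
    · push Not at h
      refine mem_union_right _ (mem_inter.mpr ⟨he, mem_sym2_iff.mpr fun a ha => ?_⟩)
      exact mem_compl.mpr fun haS => h a haS ha
  have hrest : #(G.edgeFinset ∩ Sᶜ.sym2) ≤ (Fintype.card V - #S).choose 2 := by
    have := G.map_edgeFinset_induce (s := (↑Sᶜ : Set V))
    rw [toFinset_coe] at this
    rw [← this, card_map]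
    convert card_edgeFinset_le_card_choose_two (G := G.induce (↑Sᶜ : Set V))
    simp [filter_not, card_sdiff_of_subset]
  calc #G.edgeFinset ≤ #(S.biUnion (G.incidenceFinset ·)) + #(G.edgeFinset ∩ Sᶜ.sym2) :=
        (card_le_card hsub).trans (card_union_le _ _)
    _ ≤ _ := by
      gcongr
      exact card_biUnion_le.trans (by simp [card_incidenceFinset_eq_degree])

end SimpleGraph

theorem ore_nonhamiltonian_edge_bound (n : ℕ) (hn : 3 ≤ n) (G : SimpleGraph (Fin n))
    [DecidableRel G.Adj] (hG : ¬ G.IsHamiltonian) :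
    G.edgeFinset.card ≤ (n - 1).choose 2 + 1 := by
  by_contra! hE
  refine hG (SimpleGraph.OreCondition.isHamiltonian (by simpa using hn) fun u v huv _ => ?_)
  have hpair := G.card_edgeFinset_le_sum_degree_add_choose {u, v}
  rw [Finset.sum_pair huv, Finset.card_pair huv, Fintype.card_fin] at hpair
  rw [Fintype.card_fin]
  obtain ⟨m, rfl⟩ : ∃ m, n = m + 2 := ⟨n - 2, by omega⟩
  have hchoose : (m + 1).choose 2 = m + m.choose 2 := by
    rw [Nat.choose_succ_succ, Nat.choose_one_right]
  simp only [Nat.add_sub_cancel, show m + 2 - 1 = m + 1 by omega, hchoose] at hE hpair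
  omega
end

section
/- Let H be a graph on r vertices such that for every pair of nonadjacent vertices x, y of H, d(x) + d(y) ≥ r - t for some positive integer t. Then the vertex set of H can be partitioned into at most t vertex-disjoint paths. -/
/-- `PathPartitionOn G D m` says that there are `m` pairwise vertex-disjoint paths of `G`,
all of whose vertices lie in `D`, whose vertex sets together cover `D`. -/
def PathPartitionOn {V : Type*} (G : SimpleGraph V) (D : Set V) (m : ℕ) : Prop :=
  ∃ (u v : Fin m → V) (p : ∀ i, G.Walk (u i) (v i)),
    (∀ i, (p i).IsPath) ∧
    (∀ i, ∀ x ∈ (p i).support, x ∈ D) ∧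
    (∀ i j, i ≠ j → ∀ x, x ∈ (p i).support → x ∉ (p j).support) ∧
    (∀ x ∈ D, ∃ i, x ∈ (p i).support)

/-!
Take a cover of the vertices by the fewest vertex-disjoint paths, say `m ≥ 2` of them, and let
`a` and `b` be the last vertices of two of them, `P₁` and `P₂`. Endpoints of distinct paths are
nonadjacent, otherwise two paths merge into one. On every path `P ≠ P₂` there is no edge `uv`
(in path order) with `a ~ u` and `b ~ v`: otherwise cutting `P` at `uv` and attaching the two
pieces at `a` and at `b` saves a path. As the first vertex of `P` is not adjacent to `b`, the
predecessors of the neighbours of `b` on `P`, together with the last vertex of `P`, are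
non-neighbours of `a`, so `|P| ≥ d_P(a) + d_P(b) + 1`; symmetrically for `P₂`. Summing over the
paths, `d(a) + d(b) + m ≤ r ≤ d(a) + d(b) + t`.
-/

open List

theorem List.exists_eq_append_of_not_isChain {α : Type*} {R : α → α → Prop} {l : List α}
    (h : ¬ l.IsChain R) :
    ∃ l₁ l₂ x y, l = l₁ ++ l₂ ∧ x ∈ l₁.getLast? ∧ y ∈ l₂.head? ∧ ¬ R x y := by
  obtain ⟨n, hn, hR⟩ := exists_not_getElem_of_not_isChain h
  exact ⟨l.take (n + 1), l.drop (n + 1), l[n], l[n + 1], (take_append_drop _ _).symm,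
    by simp [getLast?_take], by simp, hR⟩

theorem List.IsChain.append_of_rel {α : Type*} {R : α → α → Prop} {l₁ l₂ : List α} {x y : α}
    (h₁ : l₁.IsChain R) (h₂ : l₂.IsChain R) (hx : x ∈ l₁.getLast?) (hy : y ∈ l₂.head?)
    (hxy : R x y) : (l₁ ++ l₂).IsChain R :=
  h₁.append h₂ fun u hu v hv => by rwa [Option.mem_unique hu hx, Option.mem_unique hv hy]

open Finset in
theorem List.Nodup.countP_eq_card_filter_univ {α : Type*} [Fintype α] {l : List α}
    (hnd : l.Nodup) (hl : ∀ a, a ∈ l) (P : α → Prop) [DecidablePred P] :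
    l.countP (P ·) = #{a | P a} := by
  have : (⟨l, hnd⟩ : Finset α) = univ := eq_univ_of_forall hl
  rw [← this, card_def, filter_val, ← Multiset.countP_eq_card_filter, Multiset.coe_countP]

theorem List.Nodup.length_eq_card {α : Type*} [Fintype α] {l : List α}
    (hnd : l.Nodup) (hl : ∀ a, a ∈ l) : l.length = Fintype.card α := by
  simpa using hnd.countP_eq_card_filter_univ hl (fun _ => True)

section

variable {α : Type*} {P Q : α → Prop} [DecidablePred P] [DecidablePred Q]

theorem List.countP_add_countP_tail_lt_length :
    ∀ (x : α) (l : List α), (x :: l).IsChain (fun u v => ¬(P u ∧ Q v)) →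
      (∀ z ∈ (x :: l).getLast?, ¬P z) → (x :: l).countP (P ·) + l.countP (Q ·) < l.length + 1
  | x, [], _, hlast => by simpa using hlast
  | x, y :: l, hc, hlast => by
    have ih := countP_add_countP_tail_lt_length y l hc.tail (by simpa using hlast)
    have hxy : (if P x then 1 else 0) + (if Q y then 1 else 0) ≤ 1 := by
      have := hc.rel; split_ifs <;> simp_all
    simp only [countP_cons, decide_eq_true_eq, length_cons] at ih ⊢
    omega

theorem List.countP_add_countP_lt_length {l : List α} (hne : l ≠ [])
    (hc : l.IsChain (fun u v => ¬(P u ∧ Q v))) (hlast : ∀ z ∈ l.getLast?, ¬P z)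
    (hhead : ∀ z ∈ l.head?, ¬Q z) : l.countP (P ·) + l.countP (Q ·) < l.length := by
  obtain ⟨x, l, rfl⟩ := exists_cons_of_ne_nil hne
  simpa [countP_cons, hhead x rfl] using countP_add_countP_tail_lt_length x l hc hlast

end

namespace SimpleGraph

variable {V : Type*} {G : SimpleGraph V}

theorem isChain_adj_reverse {l : List V} : l.reverse.IsChain G.Adj ↔ l.IsChain G.Adj := by
  rw [isChain_reverse]
  exact ⟨fun h => h.imp fun _ _ => Adj.symm, fun h => h.imp fun _ _ => Adj.symm⟩

structure IsPathCover (G : SimpleGraph V) (L : List (List V)) : Prop where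
  ne_nil : ∀ l ∈ L, l ≠ []
  isChain : ∀ l ∈ L, l.IsChain G.Adj
  nodup : L.flatten.Nodup
  mem_flatten : ∀ v, v ∈ L.flatten

structure IsMinPathCover (G : SimpleGraph V) (L : List (List V)) : Prop
    extends G.IsPathCover L where
  length_le : ∀ L', G.IsPathCover L' → L.length ≤ L'.length

namespace IsPathCover

variable {L L' : List (List V)}

theorem of_flatten_perm (h : G.IsPathCover L) (hne : ∀ l ∈ L', l ≠ [])
    (hc : ∀ l ∈ L', l.IsChain G.Adj) (hp : L'.flatten ~ L.flatten) : G.IsPathCover L' :=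
  ⟨hne, hc, hp.nodup_iff.2 h.nodup, fun v => hp.mem_iff.2 (h.mem_flatten v)⟩

theorem perm (h : G.IsPathCover L) (hp : L ~ L') : G.IsPathCover L' :=
  h.of_flatten_perm (fun l hl => h.ne_nil l (hp.mem_iff.2 hl))
    (fun l hl => h.isChain l (hp.mem_iff.2 hl)) hp.flatten.symm

theorem reverse_head {l : List V} (h : G.IsPathCover (l :: L)) :
    G.IsPathCover (l.reverse :: L) := by
  refine h.of_flatten_perm ?_ ?_ ((reverse_perm l).append_right _)
  · simpa using h.ne_nil
  · simpa [isChain_adj_reverse] using h.isChain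

theorem degree_eq_sum [Fintype V] [DecidableRel G.Adj] (h : G.IsPathCover L) (a : V) :
    G.degree a = (L.map (·.countP (G.Adj a ·))).sum := by
  rw [← countP_flatten, h.nodup.countP_eq_card_filter_univ h.mem_flatten,
    ← card_neighborFinset_eq_degree, neighborFinset_eq_filter]

theorem card_eq_sum [Fintype V] (h : G.IsPathCover L) :
    Fintype.card V = (L.map length).sum := by
  rw [← length_flatten, h.nodup.length_eq_card h.mem_flatten]

theorem pathPartitionOn (h : G.IsPathCover L) : PathPartitionOn G Set.univ L.length := by
  have hsupp (i : Fin L.length) := Walk.support_ofSupport (h.ne_nil _ (getElem_mem i.2))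
    (h.isChain _ (getElem_mem i.2))
  refine ⟨_, _, fun i => Walk.ofSupport _ (h.ne_nil _ (getElem_mem i.2))
    (h.isChain _ (getElem_mem i.2)), fun i => ?_, fun _ _ _ => trivial, fun i j hij => ?_,
    fun v _ => ?_⟩
  · rw [Walk.isPath_def, hsupp]
    exact (nodup_flatten.1 h.nodup).1 _ (getElem_mem i.2)
  · rw [hsupp, hsupp]
    have hpw := pairwise_iff_getElem.1 (nodup_flatten.1 h.nodup).2
    rcases lt_or_gt_of_ne (Fin.val_ne_of_ne hij) with hlt | hlt
    · exact hpw _ _ _ _ hlt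
    · exact fun v hi hj => hpw _ _ _ _ hlt hj hi
  · obtain ⟨l, hl, hvl⟩ := List.mem_flatten.1 (h.mem_flatten v)
    obtain ⟨i, hi, rfl⟩ := mem_iff_getElem.1 hl
    exact ⟨⟨i, hi⟩, by rwa [hsupp]⟩

theorem ne_of_mem_of_mem {l₁ l₂ : List V} {a b : V} (h : G.IsPathCover (l₁ :: l₂ :: L))
    (ha : a ∈ l₁) (hb : b ∈ l₂) : a ≠ b :=
  (nodup_append.1 h.nodup).2.2 a ha b (mem_append_left _ hb)

end IsPathCover

theorem exists_isMinPathCover [Finite V] (G : SimpleGraph V) : ∃ L, G.IsMinPathCover L := by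
  classical
  have := Fintype.ofFinite V
  have hsingletons : G.IsPathCover (Finset.univ.toList.map ([·])) :=
    ⟨by simp, by simp, by simpa [← flatMap_def] using Finset.nodup_toList _, by simp⟩
  have hex : ∃ n, ∃ L, G.IsPathCover L ∧ L.length = n := ⟨_, _, hsingletons, rfl⟩
  obtain ⟨L, hL, hlen⟩ := Nat.find_spec hex
  exact ⟨L, hL, fun L' hL' => hlen ▸ Nat.find_min' hex ⟨L', hL', rfl⟩⟩

namespace IsMinPathCover

variable {L M : List (List V)} {l₁ l₂ q : List V} {a b : V}

theorem perm (h : G.IsMinPathCover L) (hp : L ~ M) : G.IsMinPathCover M :=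
  ⟨h.toIsPathCover.perm hp, hp.length_eq ▸ h.length_le⟩

theorem reverse_head (h : G.IsMinPathCover (l₁ :: L)) : G.IsMinPathCover (l₁.reverse :: L) :=
  ⟨h.toIsPathCover.reverse_head, h.length_le⟩

theorem not_adj_of_mem_getLast? (h : G.IsMinPathCover (l₁ :: l₂ :: M))
    (ha : a ∈ l₁.getLast?) (hb : b ∈ l₂.getLast?) : ¬ G.Adj a b := by
  classical
  intro hab
  have hcover : G.IsPathCover ((l₁ ++ l₂.reverse) :: M) := by
    refine h.toIsPathCover.of_flatten_perm ?_ ?_ ?_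
    · have := h.ne_nil; simp_all
    · simp only [mem_cons, forall_eq_or_imp]
      refine ⟨(h.isChain l₁ (by simp)).append_of_rel
        (isChain_adj_reverse.2 (h.isChain l₂ (by simp))) ha (by rwa [head?_reverse]) hab,
        fun l hl => h.isChain l (by simp [hl])⟩
    · simp only [flatten_cons, perm_iff_count, count_append, count_reverse]; intro; omega
  simpa using h.length_le _ hcover

theorem isChain_not_adj_first (h : G.IsMinPathCover (l₁ :: l₂ :: M))
    (ha : a ∈ l₁.getLast?) (hb : b ∈ l₂.getLast?) :
    l₁.IsChain (fun u v => ¬(G.Adj a u ∧ G.Adj b v)) := by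
  classical
  by_contra hl
  obtain ⟨q₁, q₂, x, y, rfl, hx, hy, hxy⟩ := exists_eq_append_of_not_isChain hl
  obtain ⟨hax, hby⟩ := not_not.1 hxy
  obtain ⟨hq₁, hq₂, -⟩ := isChain_append.1 (h.isChain _ mem_cons_self)
  have hq₂ne : q₂ ≠ [] := ne_nil_of_mem (mem_of_mem_head? hy)
  rw [getLast?_append_of_ne_nil _ hq₂ne] at ha
  have hcover : G.IsPathCover ((l₂ ++ q₂ ++ q₁.reverse) :: M) := by
    refine h.toIsPathCover.of_flatten_perm ?_ ?_ ?_
    · have := h.ne_nil; simp_all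
    · simp only [mem_cons, forall_eq_or_imp]
      refine ⟨((h.isChain l₂ (by simp)).append_of_rel hq₂ hb hy hby).append_of_rel
        (isChain_adj_reverse.2 hq₁) (by rwa [getLast?_append_of_ne_nil _ hq₂ne])
        (by rwa [head?_reverse]) hax, fun l hl => h.isChain l (by simp [hl])⟩
    · simp only [flatten_cons, perm_iff_count, count_append, count_reverse]; intro; omega
  simpa using h.length_le _ hcover

theorem isChain_not_adj_third (h : G.IsMinPathCover (l₁ :: l₂ :: q :: M))
    (ha : a ∈ l₁.getLast?) (hb : b ∈ l₂.getLast?) :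
    q.IsChain (fun u v => ¬(G.Adj a u ∧ G.Adj b v)) := by
  classical
  by_contra hl
  obtain ⟨q₁, q₂, x, y, rfl, hx, hy, hxy⟩ := exists_eq_append_of_not_isChain hl
  obtain ⟨hax, hby⟩ := not_not.1 hxy
  obtain ⟨hq₁, hq₂, -⟩ := isChain_append.1 (h.isChain (q₁ ++ q₂) (by simp))
  have hcover : G.IsPathCover ((l₁ ++ q₁.reverse) :: (l₂ ++ q₂) :: M) := by
    refine h.toIsPathCover.of_flatten_perm ?_ ?_ ?_
    · have := h.ne_nil; simp_all
    · simp only [mem_cons, forall_eq_or_imp]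
      refine ⟨(h.isChain l₁ (by simp)).append_of_rel (isChain_adj_reverse.2 hq₁) ha
        (by rwa [head?_reverse]) hax, (h.isChain l₂ (by simp)).append_of_rel hq₂ hb hy hby,
        fun l hl => h.isChain l (by simp [hl])⟩
    · simp only [flatten_cons, perm_iff_count, count_append, count_reverse]; intro; omega
  simpa using h.length_le _ hcover

theorem countP_adj_add_countP_adj_lt_length [DecidableRel G.Adj]
    (h : G.IsMinPathCover (l₁ :: l₂ :: M)) (ha : a ∈ l₁.getLast?) (hb : b ∈ l₂.getLast?)
    {l : List V} (hl : l ∈ l₁ :: M) :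
    l.countP (G.Adj a ·) + l.countP (G.Adj b ·) < l.length := by
  rcases mem_cons.1 hl with rfl | hl
  · refine countP_add_countP_lt_length (h.ne_nil _ mem_cons_self)
      (h.isChain_not_adj_first ha hb) (fun z hz => ?_) (fun z hz hbz => ?_)
    · rw [Option.mem_unique hz ha]
      exact G.irrefl
    · exact h.reverse_head.not_adj_of_mem_getLast? (by rwa [getLast?_reverse]) hb hbz.symm
  · obtain ⟨s, t, rfl⟩ := append_of_mem hl
    have h' : G.IsMinPathCover (l₁ :: l₂ :: l :: (s ++ t)) := h.perm ((perm_middle.cons _).cons _)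
    refine countP_add_countP_lt_length (h'.ne_nil l (by simp))
      (h'.isChain_not_adj_third ha hb) (fun z hz => ?_) (fun z hz hbz => ?_)
    · exact (h'.perm (.cons _ (.swap _ _ _))).not_adj_of_mem_getLast? ha hz
    · have h'' : G.IsMinPathCover (l :: l₂ :: l₁ :: (s ++ t)) :=
        h'.perm ((Perm.swap _ _ _).trans ((Perm.cons _ (Perm.swap _ _ _)).trans (Perm.swap _ _ _)))
      exact h''.reverse_head.not_adj_of_mem_getLast? (by rwa [getLast?_reverse]) hb hbz.symm

theorem degree_add_degree_add_length_le [Fintype V] [DecidableRel G.Adj]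
    (h : G.IsMinPathCover (l₁ :: l₂ :: M)) (ha : a ∈ l₁.getLast?) (hb : b ∈ l₂.getLast?) :
    G.degree a + G.degree b + (l₁ :: l₂ :: M).length ≤ Fintype.card V := by
  have hlt : ∀ l ∈ l₁ :: l₂ :: M, l.countP (G.Adj a ·) + l.countP (G.Adj b ·) + 1 ≤ l.length := by
    intro l hl
    rcases mem_cons.1 hl with rfl | hl
    · exact h.countP_adj_add_countP_adj_lt_length ha hb mem_cons_self
    rcases mem_cons.1 hl with rfl | hl
    · rw [add_comm (countP _ _)]
      exact (h.perm (.swap _ _ _)).countP_adj_add_countP_adj_lt_length hb ha mem_cons_self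
    · exact h.countP_adj_add_countP_adj_lt_length ha hb (mem_cons_of_mem _ hl)
  calc G.degree a + G.degree b + (l₁ :: l₂ :: M).length
      = ((l₁ :: l₂ :: M).map fun l => l.countP (G.Adj a ·) + l.countP (G.Adj b ·) + 1).sum := by
        rw [sum_map_add, sum_map_add, ← h.degree_eq_sum, ← h.degree_eq_sum]
        simp only [map_const', sum_replicate, smul_eq_mul, mul_one]
    _ ≤ ((l₁ :: l₂ :: M).map length).sum := sum_le_sum hlt
    _ = Fintype.card V := h.card_eq_sum.symm

end IsMinPathCover

end SimpleGraph

theorem partition_into_paths {V : Type*} [Fintype V] (H : SimpleGraph V)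
    [DecidableRel H.Adj] (r t : ℕ) (hr : Fintype.card V = r) (ht : 0 < t)
    (hdeg : ∀ x y : V, x ≠ y → ¬ H.Adj x y → r ≤ H.degree x + H.degree y + t) :
    ∃ m : ℕ, m ≤ t ∧ PathPartitionOn H Set.univ m := by
  obtain ⟨L, hL⟩ := H.exists_isMinPathCover
  refine ⟨L.length, ?_, hL.pathPartitionOn⟩
  match L, hL with
  | [], _ => exact Nat.zero_le t
  | [_], _ => exact ht
  | l₁ :: l₂ :: M, hL =>
    have hl₁ := hL.ne_nil l₁ (by simp)
    have hl₂ := hL.ne_nil l₂ (by simp)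
    have ha := getLast?_eq_some_getLast hl₁
    have hb := getLast?_eq_some_getLast hl₂
    have hab := hL.ne_of_mem_of_mem (getLast_mem hl₁) (getLast_mem hl₂)
    have hdeg_ab := hdeg _ _ hab (hL.not_adj_of_mem_getLast? ha hb)
    have hcount := hL.degree_add_degree_add_length_le ha hb
    omega
end

section
/- For fixed integers n ≥ 3 and k ≥ 2, the function h_k(n,x) = binomial(n-x, k) + x·binomial(x, k-1), viewed as a real polynomial function of x on the interval [1, ⌊(n-1)/2⌋], is convex, and hence attains its maximum on that interval at one of the endpoints x = 1 or x = ⌊(n-1)/2⌋. -/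
/-- Real binomial coefficient: `a(a-1)⋯(a-b+1)/b!` when `a ≥ b-1`, and `0` otherwise. -/
noncomputable def rchoose (a : ℝ) (b : ℕ) : ℝ :=
  if (b : ℝ) - 1 ≤ a then (∏ i ∈ Finset.range b, (a - i)) / (Nat.factorial b) else 0

/-!
On `[b - 1, ∞)` the real binomial coefficient `rchoose · b` is the descending Pochhammer
polynomial divided by `b!`, which is convex, monotone and nonnegative there and vanishes at
`b - 1`; to the left of `b - 1` it is `0`. Gluing, `rchoose · b` is convex and monotone on all
of `ℝ` for `b ≠ 0`. Hence `x ↦ rchoose (n - x) k` is convex, `x ↦ x * rchoose x (k - 1)` is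
convex on `[0, ∞)` as a product of nonnegative monotone convex functions, and a convex function
on a segment is bounded by the larger of its endpoint values.
-/

open Set Nat

lemma rchoose_eq_descPochhammer {a : ℝ} {b : ℕ} (h : (b : ℝ) - 1 ≤ a) :
    rchoose a b = (b ! : ℝ)⁻¹ * (descPochhammer ℝ b).eval a := by
  rw [rchoose, if_pos h, descPochhammer_eval_eq_prod_range, div_eq_inv_mul]

lemma rchoose_eq_zero {a : ℝ} {b : ℕ} (h : a < (b : ℝ) - 1) : rchoose a b = 0 :=
  if_neg h.not_ge

lemma rchoose_eq_piecewise (b : ℕ) :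
    (rchoose · b) =
      (Ici ((b : ℝ) - 1)).piecewise (fun a => (b ! : ℝ)⁻¹ * (descPochhammer ℝ b).eval a) 0 := by
  ext a
  simp only [Set.piecewise, mem_Ici, Pi.zero_apply]
  split_ifs with h
  · exact rchoose_eq_descPochhammer h
  · exact rchoose_eq_zero (not_le.1 h)

lemma monotoneOn_descPochhammer_div_factorial (b : ℕ) :
    MonotoneOn (fun a : ℝ => (b ! : ℝ)⁻¹ * (descPochhammer ℝ b).eval a) (Ici ((b : ℝ) - 1)) :=
  fun _ ha _ ha' h =>
    mul_le_mul_of_nonneg_left (monotoneOn_descPochhammer_eval b ha ha' h) (by positivity)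

lemma rchoose_nonneg (a : ℝ) (b : ℕ) : 0 ≤ rchoose a b := by
  rcases le_or_gt ((b : ℝ) - 1) a with h | h
  · rw [rchoose_eq_descPochhammer h]
    exact mul_nonneg (by positivity) (descPochhammer_nonneg h)
  · exact (rchoose_eq_zero h).ge

lemma monotone_rchoose (b : ℕ) : Monotone (rchoose · b) := by
  intro a a' h
  rcases le_or_gt ((b : ℝ) - 1) a with ha | ha
  · simp only [rchoose_eq_descPochhammer ha, rchoose_eq_descPochhammer (ha.trans h)]
    exact monotoneOn_descPochhammer_div_factorial b ha (mem_Ici.2 (ha.trans h)) h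
  · simpa only [rchoose_eq_zero ha] using rchoose_nonneg a' b

lemma convexOn_rchoose {b : ℕ} (hb : b ≠ 0) : ConvexOn ℝ univ (rchoose · b) := by
  rw [rchoose_eq_piecewise]
  refine convexOn_univ_piecewise_Ici_of_monotoneOn_Ici_antitoneOn_Iic
    ((convexOn_descPochhammer_eval b).smul (by positivity)) (convexOn_const 0 (convex_Iic _))
    (monotoneOn_descPochhammer_div_factorial b) antitoneOn_const ?_
  simp [← Nat.cast_pred (Nat.pos_of_ne_zero hb),
    descPochhammer_eval_coe_nat_of_lt (Nat.sub_one_lt hb)]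

lemma convexOn_mul_rchoose {b : ℕ} (hb : b ≠ 0) : ConvexOn ℝ (Ici 0) (fun x => x * rchoose x b) :=
  (convexOn_id (convex_Ici 0)).mul ((convexOn_rchoose hb).subset (subset_univ _) (convex_Ici 0))
    (fun _ hx => hx) (fun x _ => rchoose_nonneg x b)
    (monotoneOn_id.monovaryOn ((monotone_rchoose b).monotoneOn _))

lemma convexOn_rchoose_const_sub {b : ℕ} (hb : b ≠ 0) (c : ℝ) :
    ConvexOn ℝ univ (fun x => rchoose (c - x) b) :=
  (convexOn_rchoose hb).comp_affineMap (AffineMap.const ℝ ℝ c - AffineMap.id ℝ ℝ)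

theorem hk_convex_max_at_endpoints_general (n k : ℕ) (hk : 2 ≤ k) :
    ConvexOn ℝ (Set.Icc (1 : ℝ) (((n - 1) / 2 : ℕ) : ℝ))
      (fun x : ℝ => rchoose ((n : ℝ) - x) k + x * rchoose x (k - 1)) ∧
    ∀ x ∈ Set.Icc (1 : ℝ) (((n - 1) / 2 : ℕ) : ℝ),
      rchoose ((n : ℝ) - x) k + x * rchoose x (k - 1) ≤
        max (rchoose ((n : ℝ) - 1) k + 1 * rchoose 1 (k - 1))
          (rchoose ((n : ℝ) - (((n - 1) / 2 : ℕ) : ℝ)) k +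
            (((n - 1) / 2 : ℕ) : ℝ) * rchoose (((n - 1) / 2 : ℕ) : ℝ) (k - 1)) := by
  set M : ℝ := (((n - 1) / 2 : ℕ) : ℝ)
  have hconv : ConvexOn ℝ (Icc 1 M) (fun x => rchoose (n - x) k + x * rchoose x (k - 1)) :=
    ((convexOn_rchoose_const_sub (by omega) n).subset (subset_univ _) (convex_Icc 1 M)).add
      ((convexOn_mul_rchoose (by omega)).subset (fun x hx => zero_le_one.trans hx.1)
        (convex_Icc 1 M))
  refine ⟨hconv, fun x hx => ?_⟩
  have hM : 1 ≤ M := hx.1.trans hx.2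
  exact hconv.le_on_segment ⟨le_rfl, hM⟩ ⟨hM, le_rfl⟩ (by rwa [segment_eq_Icc hM])

theorem hk_convex_max_at_endpoints (n k : ℕ) (hn : 3 ≤ n) (hk : 2 ≤ k) :
    ConvexOn ℝ (Set.Icc (1 : ℝ) (((n - 1) / 2 : ℕ) : ℝ))
      (fun x : ℝ => rchoose ((n : ℝ) - x) k + x * rchoose x (k - 1)) ∧
    ∀ x ∈ Set.Icc (1 : ℝ) (((n - 1) / 2 : ℕ) : ℝ),
      rchoose ((n : ℝ) - x) k + x * rchoose x (k - 1) ≤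
        max (rchoose ((n : ℝ) - 1) k + 1 * rchoose 1 (k - 1))
          (rchoose ((n : ℝ) - (((n - 1) / 2 : ℕ) : ℝ)) k +
            (((n - 1) / 2 : ℕ) : ℝ) * rchoose (((n - 1) / 2 : ℕ) : ℝ) (k - 1)) :=
  hk_convex_max_at_endpoints_general n k hk
end

section
/- Let n, d be integers with 1 ≤ d ≤ ⌊(n-1)/2⌋. The graph H_{n,d}, obtained from a complete graph on n-d vertices with vertex set A by adding d new vertices each adjacent to the same fixed d vertices of A, is nonhamiltonian, has minimum degree d, and has exactly binomial(n-d, 2) + d² edges. -/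
/-!
The `d` vertices of `D` are pairwise nonadjacent and all their neighbours lie in the `d`-set `S`
of common neighbours. In a Hamiltonian cycle the `2d` cycle edges at `D` therefore use up both
cycle edges at every vertex of `S`, so `S ∪ D` is closed along the cycle and must contain every
vertex; but `A \ S` is nonempty since `n - d > d`. The degrees are `n - 1` on `S`, `n - d - 1` on
`A \ S` and `d` on `D`, and summing them gives the edge count.
-/

/-- The graph `H_{n,d}`: a clique `A = {0,…,n-d-1}` together with `d` further vertices
`{n-d,…,n-1}`, each adjacent to the same `d` vertices `{0,…,d-1}` of `A`. -/
def Hnd (n d : ℕ) : SimpleGraph (Fin n) :=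
  SimpleGraph.fromRel (fun x y =>
    (x.val < n - d ∧ y.val < n - d) ∨ (x.val < d ∧ n - d ≤ y.val))

instance {n d : ℕ} : DecidableRel (Hnd n d).Adj := fun x y =>
  decidable_of_iff _ (SimpleGraph.fromRel_adj _ x y).symm

open Finset

namespace SimpleGraph

variable {V : Type*} {G : SimpleGraph V}

theorem Walk.getVert_mem_of_forall_toSubgraph_adj {u v : V} (p : G.Walk u v) {X : Set V}
    (hX : ∀ x y, p.toSubgraph.Adj x y → x ∈ X → y ∈ X) (hu : u ∈ X) (i : ℕ) :
    p.getVert i ∈ X := by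
  induction i with
  | zero => simpa using hu
  | succ i ih =>
    rcases lt_or_ge i p.length with hi | hi
    · exact hX _ _ (p.toSubgraph_adj_getVert hi) ih
    · rwa [p.getVert_of_length_le (by omega), ← p.getVert_of_length_le hi]

variable [Fintype V]

theorem Subgraph.mem_of_adj_of_ncard_neighborSet_eq_two {H : G.Subgraph}
    (hH : ∀ v, (H.neighborSet v).ncard = 2) {I S : Finset V}
    (hIS : ∀ v ∈ I, ∀ w, G.Adj v w → w ∈ S) (hcard : #S ≤ #I) {s w : V} (hs : s ∈ S)
    (hsw : H.Adj s w) : w ∈ I := by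
  classical
  set below : V → Finset V := fun t => I.bipartiteBelow (fun a b => H.Adj a b) t
  have hN : ∀ v, #{u | H.Adj v u} = 2 := fun v => by
    rw [← hH v, Set.ncard_eq_toFinset_card']; congr 1; ext; simp
  have hbelow_sub : ∀ t, below t ⊆ ({u | H.Adj t u} : Finset V) := fun t u hu => by
    simp only [below, bipartiteBelow, mem_filter] at hu ⊢
    exact ⟨mem_univ _, hu.2.symm⟩
  have habove : ∀ v ∈ I, #(S.bipartiteAbove (fun a b => H.Adj a b) v) = 2 := fun v hv => by
    rw [← hN v]; congr 1; ext u
    simp only [bipartiteAbove, mem_filter, mem_univ, true_and, and_iff_right_iff_imp]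
    exact fun h => hIS v hv u (H.adj_sub h)
  have hdouble := sum_card_bipartiteAbove_eq_sum_card_bipartiteBelow (s := I) (t := S)
    (fun a b => H.Adj a b)
  rw [sum_congr rfl habove, sum_const, smul_eq_mul] at hdouble
  have hbelow_le : ∀ t, #(below t) ≤ 2 := fun t => hN t ▸ card_le_card (hbelow_sub t)
  have hsat : ∀ t ∈ S, #(below t) = 2 := by
    refine (sum_eq_sum_iff_of_le fun t _ => hbelow_le t).1 (le_antisymm ?_ ?_)
    · exact sum_le_sum fun t _ => hbelow_le t
    · rw [sum_const, smul_eq_mul, ← hdouble]; omega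
  have hw : w ∈ below s := by
    rw [eq_of_subset_of_card_le (hbelow_sub s) (by rw [hN, hsat s hs])]
    simpa using hsw
  exact (mem_filter.1 hw).1

theorem IsHamiltonian.union_eq_univ_of_neighbors_subset [DecidableEq V] (hG : G.IsHamiltonian)
    {I S : Finset V} (hI : I.Nonempty) (hIS : ∀ v ∈ I, ∀ w, G.Adj v w → w ∈ S)
    (hcard : #S ≤ #I) : I ∪ S = univ := by
  obtain ⟨v₀, hv₀⟩ := hI
  rcases subsingleton_or_nontrivial V with _ | _
  · exact eq_univ_of_forall fun x => mem_union_left _ (Subsingleton.elim v₀ x ▸ hv₀)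
  obtain ⟨p, hp⟩ := hG.exists_isHamiltonianCycle v₀
  have hH : ∀ v, (p.toSubgraph.neighborSet v).ncard = 2 := fun v =>
    hp.isCycle.ncard_neighborSet_toSubgraph_eq_two (hp.mem_support v)
  have hclosed : ∀ x y, p.toSubgraph.Adj x y →
      x ∈ (↑(I ∪ S) : Set V) → y ∈ (↑(I ∪ S) : Set V) := by
    intro x y hxy hx
    rcases mem_union.1 hx with hx | hx
    · exact mem_union_right _ (hIS x hx y (p.toSubgraph.adj_sub hxy))
    · exact mem_union_left _
        (p.toSubgraph.mem_of_adj_of_ncard_neighborSet_eq_two hH hIS hcard hx hxy)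
  refine eq_univ_of_forall fun x => ?_
  obtain ⟨i, rfl, -⟩ := p.mem_support_iff_exists_getVert.1 (hp.mem_support x)
  exact p.getVert_mem_of_forall_toSubgraph_adj hclosed (mem_union_left _ hv₀) i

end SimpleGraph

theorem Fin.card_filter_le_val {n m : ℕ} : #{i : Fin n | m ≤ i.val} = n - m := by
  have h := card_filter_add_card_filter_not (s := (univ : Finset (Fin n))) (fun i => i.val < m)
  simp only [not_lt, card_univ, Fintype.card_fin, Fin.card_filter_val_lt] at h
  omega

section Hnd

open SimpleGraph

variable {n d : ℕ}

theorem Hnd_adj {x y : Fin n} :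
    (Hnd n d).Adj x y ↔ x ≠ y ∧
      ((x.val < n - d ∧ y.val < n - d) ∨ (x.val < d ∧ n - d ≤ y.val) ∨
        (y.val < d ∧ n - d ≤ x.val)) := by
  simp only [Hnd, fromRel_adj]
  tauto

theorem Hnd_degree (hd : d ≤ n - d) (v : Fin n) :
    (Hnd n d).degree v =
      (if v.val < n - d then n - d - 1 else d) + if v.val < d then d else 0 := by
  rw [← card_neighborFinset_eq_degree]
  rcases lt_or_ge v.val d with hS | hS
  · have : (Hnd n d).neighborFinset v = univ.erase v := by
      ext w
      simp only [mem_neighborFinset, Hnd_adj, ne_eq, Fin.ext_iff, mem_erase, mem_univ, and_true]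
      omega
    rw [this, card_erase_of_mem (mem_univ _), card_univ, Fintype.card_fin]
    split_ifs <;> omega
  rcases lt_or_ge v.val (n - d) with hA | hD
  · have : (Hnd n d).neighborFinset v = ({w | w.val < n - d} : Finset (Fin n)).erase v := by
      ext w
      simp only [mem_neighborFinset, Hnd_adj, ne_eq, Fin.ext_iff, mem_erase, mem_filter,
        mem_univ, true_and]
      omega
    rw [this, card_erase_of_mem (by simpa using hA), Fin.card_filter_val_lt]
    split_ifs <;> omega
  · have : (Hnd n d).neighborFinset v = ({w | w.val < d} : Finset (Fin n)) := by
      ext w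
      simp only [mem_neighborFinset, Hnd_adj, ne_eq, Fin.ext_iff, mem_filter, mem_univ, true_and]
      omega
    rw [this, Fin.card_filter_val_lt]
    split_ifs <;> omega

theorem Hnd_card_edgeFinset (hd : d ≤ n - d) :
    #(Hnd n d).edgeFinset = (n - d).choose 2 + d ^ 2 := by
  have hsum := (Hnd n d).sum_degrees_eq_twice_card_edges
  simp only [Hnd_degree hd, sum_add_distrib, sum_ite, sum_const, smul_eq_mul, not_lt,
    Fin.card_filter_val_lt, Fin.card_filter_le_val] at hsum
  have hchoose : (n - d).choose 2 * 2 = (n - d) * (n - d - 1) := by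
    rw [Nat.choose_two_right, Nat.div_two_mul_two_of_even (Nat.even_mul_pred_self _)]
  rw [min_eq_right (by omega), min_eq_right (by omega), Nat.sub_sub_self (by omega)] at hsum
  linarith

theorem Hnd_not_isHamiltonian (hd : 1 ≤ d) (hn : 2 * d < n) : ¬ (Hnd n d).IsHamiltonian := by
  intro hG
  have hcover := hG.union_eq_univ_of_neighbors_subset (I := {v : Fin n | n - d ≤ v.val})
    (S := {v : Fin n | v.val < d})
    ⟨⟨n - 1, by omega⟩, by simp only [mem_filter, mem_univ, true_and]; omega⟩
    (fun v hv w hvw => by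
      simp only [mem_filter, mem_univ, true_and, Hnd_adj] at hv hvw ⊢; omega)
    (by rw [Fin.card_filter_val_lt, Fin.card_filter_le_val]; omega)
  have hmid := mem_univ (⟨d, by omega⟩ : Fin n)
  rw [← hcover] at hmid
  simp only [mem_union, mem_filter, mem_univ, true_and] at hmid
  omega

end Hnd

theorem Hnd_properties (n d : ℕ) (hd1 : 1 ≤ d) (hd2 : d ≤ (n - 1) / 2) :
    ¬ (Hnd n d).IsHamiltonian ∧
    (∀ v, d ≤ (Hnd n d).degree v) ∧ (∃ v, (Hnd n d).degree v = d) ∧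
    (Hnd n d).edgeFinset.card = (n - d).choose 2 + d ^ 2 := by
  have hn : 2 * d < n := by omega
  refine ⟨Hnd_not_isHamiltonian hd1 hn, fun v => ?_, ⟨⟨n - 1, by omega⟩, ?_⟩,
    Hnd_card_edgeFinset (by omega)⟩
  · rw [Hnd_degree (by omega)]
    split_ifs <;> omega
  · rw [Hnd_degree (by omega), Fin.val_mk]
    split_ifs <;> omega
end

section
/- Let n, d, k be integers with k ≥ 2 and 1 ≤ d ≤ ⌊(n-1)/2⌋. The number of k-cliques in the graph H_{n,d} equals binomial(n-d, k) + d·binomial(d, k-1). -/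
open Finset

lemma card_filter_val_lt (n m : ℕ) (h : m ≤ n) :
    (Finset.univ.filter (fun x : Fin n => x.val < m)).card = m := by
  have : Finset.univ.filter (fun x : Fin n => x.val < m)
      = Finset.map (Fin.castLEEmb h) Finset.univ := by
    ext x
    simp only [Finset.mem_filter, Finset.mem_univ, true_and, Finset.mem_map,
      Fin.castLEEmb]
    constructor
    · intro hx
      exact ⟨⟨x.val, hx⟩, by simp [Fin.castLE, Fin.ext_iff]⟩
    · rintro ⟨a, rfl⟩
      simpa using a.isLt
  rw [this, Finset.card_map, Finset.card_univ, Fintype.card_fin]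

lemma Hnd_adj_iff (n d : ℕ) (x y : Fin n) :
    (Hnd n d).Adj x y ↔ x ≠ y ∧ ((x.val < n - d ∧ y.val < n - d) ∨
      (x.val < d ∧ n - d ≤ y.val) ∨ (y.val < d ∧ n - d ≤ x.val)) := by
  rw [Hnd, SimpleGraph.fromRel_adj]
  tauto

theorem Hnd_clique_count (n d k : ℕ) (hk : 2 ≤ k) (hd1 : 1 ≤ d) (hd2 : d ≤ (n - 1) / 2) :
    ((Hnd n d).cliqueFinset k).card = (n - d).choose k + d * d.choose (k - 1) := by
  have h2d : d * 2 ≤ n - 1 := (Nat.le_div_iff_mul_le (by norm_num)).mp hd2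
  have hdm : d < n - d := by omega
  set A : Finset (Fin n) := univ.filter (fun x => x.val < n - d) with hA
  set B : Finset (Fin n) := univ.filter (fun x => x.val < d) with hB
  set D : Finset (Fin n) := univ.filter (fun x => n - d ≤ x.val) with hD
  have cardA : A.card = n - d := card_filter_val_lt n (n - d) (Nat.sub_le n d)
  have cardB : B.card = d := card_filter_val_lt n d (by omega)
  have cardD : D.card = d := by
    have h2 : Disjoint A D := by
      rw [Finset.disjoint_left]
      intro x hx hx'
      simp only [hA, hD, Finset.mem_filter, Finset.mem_univ, true_and] at hx hx'
      omega
    have h1 : A ∪ D = univ := by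
      ext x
      simp only [hA, hD, Finset.mem_union, Finset.mem_filter, Finset.mem_univ, true_and,
        iff_true]
      omega
    have h3 := Finset.card_union_of_disjoint h2
    rw [h1] at h3
    have h4 : (univ : Finset (Fin n)).card = n := by simp
    omega
  set S₁ : Finset (Finset (Fin n)) := A.powersetCard k with hS₁
  set S₂ : Finset (Finset (Fin n)) :=
    (D ×ˢ B.powersetCard (k - 1)).image (fun p => insert p.1 p.2) with hS₂
  have key : (Hnd n d).cliqueFinset k = S₁ ∪ S₂ := by
    ext s
    rw [SimpleGraph.mem_cliqueFinset_iff, Finset.mem_union]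
    constructor
    · rintro ⟨hclique, hcard⟩
      by_cases hall : ∀ x ∈ s, x.val < n - d
      · left
        rw [hS₁, Finset.mem_powersetCard]
        exact ⟨fun x hx => by simp [hA, hall x hx], hcard⟩
      · right
        push_neg at hall
        obtain ⟨v, hvs, hv⟩ := hall
        have hsmall : ∀ w ∈ s, w ≠ v → w.val < d := by
          intro w hws hwv
          have hadj := hclique hws hvs hwv
          rw [Hnd_adj_iff] at hadj
          omega
        rw [hS₂, Finset.mem_image]
        refine ⟨(v, s.erase v), ?_, ?_⟩
        · rw [Finset.mem_product]
          constructor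
          · simp only [hD, Finset.mem_filter, Finset.mem_univ, true_and]; exact hv
          · rw [Finset.mem_powersetCard]
            constructor
            · intro w hw
              rw [Finset.mem_erase] at hw
              simp [hB, hsmall w hw.2 hw.1]
            · rw [Finset.card_erase_of_mem hvs, hcard]
        · exact Finset.insert_erase hvs
    · rintro (hs | hs)
      · rw [hS₁, Finset.mem_powersetCard] at hs
        obtain ⟨hsub, hcard⟩ := hs
        refine ⟨?_, hcard⟩
        intro x hx y hy hxy
        have hx' := hsub hx
        have hy' := hsub hy
        simp only [hA, Finset.mem_filter] at hx' hy'
        rw [Hnd_adj_iff]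
        exact ⟨hxy, Or.inl ⟨hx'.2, hy'.2⟩⟩
      · rw [hS₂, Finset.mem_image] at hs
        obtain ⟨⟨v, t⟩, hmem, rfl⟩ := hs
        rw [Finset.mem_product] at hmem
        obtain ⟨hvD, htB⟩ := hmem
        simp only [hD, Finset.mem_filter, Finset.mem_univ, true_and] at hvD
        rw [Finset.mem_powersetCard] at htB
        obtain ⟨htsub, htcard⟩ := htB
        have htlt : ∀ x ∈ t, x.val < d := by
          intro x hx
          have := htsub hx
          simpa [hB] using this
        have hvt : v ∉ t := fun h => by have := htlt v h; omega
        constructor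
        · intro x hx y hy hxy
          simp only [Finset.coe_insert, Set.mem_insert_iff, Finset.mem_coe] at hx hy
          rw [Hnd_adj_iff]
          refine ⟨hxy, ?_⟩
          rcases hx with rfl | hx <;> rcases hy with rfl | hy
          · exact absurd rfl hxy
          · exact Or.inr (Or.inr ⟨htlt y hy, hvD⟩)
          · exact Or.inr (Or.inl ⟨htlt x hx, hvD⟩)
          · exact Or.inl ⟨by have := htlt x hx; omega, by have := htlt y hy; omega⟩
        · rw [Finset.card_insert_of_notMem hvt, htcard]
          omega
  have hdisj : Disjoint S₁ S₂ := by
    rw [Finset.disjoint_left]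
    intro s hs1 hs2
    rw [hS₁, Finset.mem_powersetCard] at hs1
    rw [hS₂, Finset.mem_image] at hs2
    obtain ⟨⟨v, t⟩, hmem, rfl⟩ := hs2
    rw [Finset.mem_product] at hmem
    have hvD := hmem.1
    simp only [hD, Finset.mem_filter, Finset.mem_univ, true_and] at hvD
    have := hs1.1 (Finset.mem_insert_self v t)
    simp only [hA, Finset.mem_filter] at this
    omega
  have hinj : Set.InjOn (fun p : Fin n × Finset (Fin n) => insert p.1 p.2)
      ↑(D ×ˢ B.powersetCard (k - 1)) := by
    rintro ⟨v, t⟩ hm ⟨v', t'⟩ hm' heq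
    rw [Finset.mem_coe, Finset.mem_product] at hm hm'
    simp only at heq
    have hvD : n - d ≤ v.val := by
      have := hm.1; simpa [hD] using this
    have hvD' : n - d ≤ v'.val := by
      have := hm'.1; simpa [hD] using this
    have ht : ∀ x ∈ t, x.val < d := by
      intro x hx
      have := (Finset.mem_powersetCard.mp hm.2).1 hx
      simpa [hB] using this
    have ht' : ∀ x ∈ t', x.val < d := by
      intro x hx
      have := (Finset.mem_powersetCard.mp hm'.2).1 hx
      simpa [hB] using this
    have hvv : v = v' := by
      have hmem : v ∈ insert v' t' := heq ▸ Finset.mem_insert_self v t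
      rcases Finset.mem_insert.mp hmem with h | h
      · exact h
      · exact absurd (ht' v h) (by omega)
    subst hvv
    have htt : t = t' := by
      ext x
      constructor <;> intro hx
      · rcases Finset.mem_insert.mp (heq ▸ Finset.mem_insert_of_mem hx) with h | h
        · exact absurd (ht x hx) (by rw [h]; omega)
        · exact h
      · rcases Finset.mem_insert.mp (heq ▸ Finset.mem_insert_of_mem hx) with h | h
        · exact absurd (ht' x hx) (by rw [h]; omega)
        · exact h
    rw [htt]
  rw [key, Finset.card_union_of_disjoint hdisj, hS₁, Finset.card_powersetCard, cardA,
    hS₂, Finset.card_image_of_injOn hinj, Finset.card_product,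
    Finset.card_powersetCard, cardB, cardD]
end

section
/- For any integers d, t, n with t ≥ 3 and n ≥ 2dt + d + t, and any graph F on t vertices, the number of labeled copies of F in K'_{n,d} is at most the number of labeled copies of F in H_{n,d}. -/
/-- The graph `K'_{n,d}`: an edge-disjoint union of a clique on `{0,…,n-d-1}` and a clique
on `{n-d-1,…,n-1}` sharing the single vertex `n-d-1`. -/
def Knd' (n d : ℕ) : SimpleGraph (Fin n) :=
  SimpleGraph.fromRel (fun x y =>
    (x.val < n - d ∧ y.val < n - d) ∨ (n - d - 1 ≤ x.val ∧ n - d - 1 ≤ y.val))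

/-- The number of labeled copies of `F` in `G`: injections of vertex sets mapping
edges of `F` to edges of `G`. -/
noncomputable def labeledCopies {α β : Type*} [Fintype α] [Fintype β]
    (G : SimpleGraph β) (F : SimpleGraph α) : ℕ :=
  Nat.card {φ : α ↪ β // ∀ x y, F.Adj x y → G.Adj (φ x) (φ y)}

/-!
Write `n = m + d`, so that `A = {v | v < m}` is the big clique and `B = {v | m ≤ v}` the other `d`
vertices, and sort the labeled copies `φ` of `F` by `S = φ⁻¹(B)`. In `K'_{n,d}` a vertex outside
`S` adjacent to `S` must go to the cut vertex `m - 1`, so `S` has at most one outer boundary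
vertex, and the copies over `S` number at most `d^(|S|) m^(t-|S|)`, or `d^(|S|) (m-1)^(t-|S|-1)`
once `S` has a boundary vertex (falling factorials). In `H_{n,d}` the set `I = φ⁻¹(B)` is
independent; sending its outer boundary `K` into the `d` common neighbours of `B` and the rest
of `F` into the remaining vertices of `A` gives at least `d^(|I|) d^(|K|) (m-|K|)^(t-|I|-|K|)`
copies over `I`.

Count twice, charging the copies over `S` to two maximal independent subsets of `S`, which are
distinct unless `S` is independent. A maximal independent `I ⊆ S` dominates `S`, and the vertices
of `K` missing from `S` lie on the boundary of `S`, so `S` is `I ∪ K` or `I ∪ K` minus one vertex.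
What remains for each independent `I` is an inequality between falling factorials, which follows
from `m^(j) ≤ 2 (m-k)^(j)` for `(2k+1) j ≤ m`.
-/

open Finset Function
open scoped Classical

noncomputable section

namespace KndHnd

section Arithmetic

/-- The Weierstrass product inequality `∏_{i<j} (1 - k / (m - i)) ≥ 1 - k j / c`, cleared of
denominators. -/
lemma sub_mul_descFactorial_le_mul_descFactorial_sub {c k m : ℕ} :
    ∀ {j : ℕ}, c + j ≤ m → (c - k * j) * m.descFactorial j ≤ c * (m - k).descFactorial j
  | 0, _ => by simp
  | j + 1, h => by
    have ih := sub_mul_descFactorial_le_mul_descFactorial_sub (c := c) (k := k) (m := m)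
      (j := j) (by omega)
    rw [Nat.descFactorial_succ, Nat.descFactorial_succ, mul_add, mul_one]
    have step : (c - (k * j + k)) * (m - j) ≤ (c - k * j) * (m - k - j) := by
      generalize k * j = P at *
      obtain hB | ⟨B, hB⟩ : c - P ≤ k ∨ ∃ B, c - P = B + k :=
        (le_or_gt (c - P) k).imp_right fun h => ⟨c - P - k, by omega⟩
      · simp [show c - (P + k) = 0 by omega]
      · obtain ⟨A, hA⟩ : ∃ A, m - j = A + B + k := ⟨m - j - B - k, by omega⟩
        rw [show c - (P + k) = B by omega, hB, hA, show m - k - j = A + B by omega]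
        nlinarith
    calc (c - (k * j + k)) * ((m - j) * m.descFactorial j)
        = ((c - (k * j + k)) * (m - j)) * m.descFactorial j := by ring
      _ ≤ ((c - k * j) * (m - k - j)) * m.descFactorial j := Nat.mul_le_mul_right _ step
      _ = (m - k - j) * ((c - k * j) * m.descFactorial j) := by ring
      _ ≤ (m - k - j) * (c * (m - k).descFactorial j) := Nat.mul_le_mul_left _ ih
      _ = c * ((m - k - j) * (m - k).descFactorial j) := by ring

lemma descFactorial_le_two_mul_descFactorial_sub {k j m : ℕ} (h : (2 * k + 1) * j ≤ m) :
    m.descFactorial j ≤ 2 * (m - k).descFactorial j := by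
  rcases Nat.eq_zero_or_pos k with rfl | hk
  · simp only [Nat.sub_zero]; omega
  rcases Nat.eq_zero_or_pos j with rfl | hj
  · simp
  have hjm : j ≤ m := le_trans (Nat.le_mul_of_pos_left j (by omega)) h
  have key := sub_mul_descFactorial_le_mul_descFactorial_sub (c := m - j) (k := k) (m := m)
    (j := j) (by omega)
  have hkj : 1 ≤ k * j := Nat.one_le_iff_ne_zero.2 (by positivity)
  have h' : 2 * (k * j) + j ≤ m := by nlinarith
  generalize k * j = P at *
  refine Nat.le_of_mul_le_mul_left ?_ (by omega : 0 < m - j)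
  calc (m - j) * m.descFactorial j ≤ 2 * ((m - j - P) * m.descFactorial j) := by
        rw [← mul_assoc]; exact Nat.mul_le_mul_right _ (by omega)
    _ ≤ 2 * ((m - j) * (m - k).descFactorial j) := Nat.mul_le_mul_left _ key
    _ = (m - j) * (2 * (m - k).descFactorial j) := by ring

lemma charge_arith_of_card_boundary_eq_one {d s m j : ℕ} (hs : 1 ≤ s)
    (hm : (2 * d + 1) * j ≤ m) :
    2 * (d.descFactorial s * (m - 1).descFactorial j) + d.descFactorial (s + 1) * m.descFactorial j
      ≤ 2 * (d.descFactorial s * (d.descFactorial 1 * (m - 1).descFactorial j)) := by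
  rcases lt_or_ge d s with hds | hsd
  · simp [Nat.descFactorial_eq_zero_iff_lt.2 hds]
  have hm1 := descFactorial_le_two_mul_descFactorial_sub (k := 1)
    (le_trans (Nat.mul_le_mul_right j (by omega)) hm)
  rw [Nat.descFactorial_succ, Nat.descFactorial_one]
  calc 2 * (d.descFactorial s * (m - 1).descFactorial j)
        + (d - s) * d.descFactorial s * m.descFactorial j
      ≤ 2 * (d.descFactorial s * (m - 1).descFactorial j)
        + (d - s) * d.descFactorial s * (2 * (m - 1).descFactorial j) := by gcongr
    _ = 2 * (d.descFactorial s * ((1 + (d - s)) * (m - 1).descFactorial j)) := by ring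
    _ ≤ 2 * (d.descFactorial s * (d * (m - 1).descFactorial j)) := by gcongr; omega

lemma charge_arith_of_one_le_card_boundary {d s κ m j : ℕ} (hs : 1 ≤ s) (hκ : 1 ≤ κ)
    (hm : (2 * d + 1) * j ≤ m) :
    d.descFactorial (s + κ) * m.descFactorial j
        + κ * (d.descFactorial (s + κ - 1) * (m - 1).descFactorial j)
      ≤ 2 * (d.descFactorial s * (d.descFactorial κ * (m - κ).descFactorial j)) := by
  rcases lt_or_ge d s with hds | hsd
  · simp [Nat.descFactorial_eq_zero_iff_lt.2 (by omega : d < s + κ),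
      Nat.descFactorial_eq_zero_iff_lt.2 (by omega : d < s + κ - 1)]
  obtain ⟨k, rfl⟩ : ∃ k, κ = k + 1 := ⟨κ - 1, by omega⟩
  set x := d - s
  have hsplit : d.descFactorial (s + (k + 1)) =
      d.descFactorial s * ((x - k) * x.descFactorial k) := by
    rw [← Nat.descFactorial_mul_descFactorial (Nat.le_add_right s (k + 1)),
      Nat.add_sub_cancel_left, Nat.descFactorial_succ]
    ring
  have hsplit' : d.descFactorial (s + (k + 1) - 1) = d.descFactorial s * x.descFactorial k := by
    rw [show s + (k + 1) - 1 = s + k by omega,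
      ← Nat.descFactorial_mul_descFactorial (Nat.le_add_right s k), Nat.add_sub_cancel_left,
      mul_comm]
  have htop : d.descFactorial (k + 1) = d * (d - 1).descFactorial k := by
    obtain ⟨e, rfl⟩ : ∃ e, d = e + 1 := ⟨d - 1, by omega⟩
    rw [Nat.succ_descFactorial_succ, Nat.add_sub_cancel]
  rw [hsplit, hsplit', htop]
  rcases lt_or_ge x k with hxk | hkx
  · simp [Nat.descFactorial_eq_zero_iff_lt.2 hxk]
  have hmk := descFactorial_le_two_mul_descFactorial_sub (k := k + 1)
    (le_trans (Nat.mul_le_mul_right j (by omega)) hm)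
  have hm1 : (m - 1).descFactorial j ≤ m.descFactorial j := Nat.descFactorial_le _ (by omega)
  have hx : x.descFactorial k ≤ (d - 1).descFactorial k := Nat.descFactorial_le _ (by omega)
  calc d.descFactorial s * ((x - k) * x.descFactorial k) * m.descFactorial j
        + (k + 1) * (d.descFactorial s * x.descFactorial k * (m - 1).descFactorial j)
      = d.descFactorial s * x.descFactorial k *
          ((x - k) * m.descFactorial j + (k + 1) * (m - 1).descFactorial j) := by ring
    _ ≤ d.descFactorial s * x.descFactorial k *
          ((x - k) * (2 * (m - (k + 1)).descFactorial j)
            + (k + 1) * (2 * (m - (k + 1)).descFactorial j)) := by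
        gcongr; exact hm1.trans hmk
    _ = d.descFactorial s * x.descFactorial k * (x - k + (k + 1)) *
          (2 * (m - (k + 1)).descFactorial j) := by ring
    _ ≤ d.descFactorial s * (d - 1).descFactorial k * d *
          (2 * (m - (k + 1)).descFactorial j) := by gcongr; omega
    _ = 2 * (d.descFactorial s *
          (d * (d - 1).descFactorial k * (m - (k + 1)).descFactorial j)) := by ring

end Arithmetic

section Embeddings

variable {α β ι : Type*} [Fintype α] [Fintype β] [Fintype ι] [DecidableEq β] [DecidableEq ι]

lemma card_embedding_mapsTo_le (p : α → ι) (T : ι → Finset β) :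
    #{φ : α ↪ β | ∀ x, φ x ∈ T (p x)} ≤ ∏ i, (#(T i)).descFactorial #{x | p x = i} := by
  rw [← Fintype.card_subtype]
  calc Fintype.card {φ : α ↪ β // ∀ x, φ x ∈ T (p x)}
      ≤ Fintype.card (∀ i, {x // p x = i} ↪ T i) := by
        refine Fintype.card_le_of_injective (fun φ i =>
          ⟨fun x => ⟨φ.1 x, by obtain ⟨x, rfl⟩ := x; exact φ.2 x⟩, fun x y h => ?_⟩)
          fun φ ψ h => ?_
        · exact Subtype.ext (φ.1.injective (congrArg Subtype.val h))
        · ext x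
          exact congrArg Subtype.val (DFunLike.congr_fun (congrFun h (p x)) ⟨x, rfl⟩)
    _ = _ := by simp [Fintype.card_embedding_eq, Fintype.card_subtype]

lemma card_embedding_mapsTo_of_pairwiseDisjoint (p : α → ι) (T : ι → Finset β)
    (hT : Pairwise (Disjoint on T)) :
    #{φ : α ↪ β | ∀ x, φ x ∈ T (p x)} = ∏ i, (#(T i)).descFactorial #{x | p x = i} := by
  refine (card_embedding_mapsTo_le p T).antisymm ?_
  have glue_inj (f : ∀ i, {x // p x = i} ↪ T i) :
      Injective fun x => (f (p x) ⟨x, rfl⟩ : β) := by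
    intro x y hxy
    suffices ∀ i j (hx : p x = i) (hy : p y = j), (f i ⟨x, hx⟩ : β) = f j ⟨y, hy⟩ → x = y from
      this _ _ rfl rfl hxy
    intro i j hx hy h
    obtain rfl | hij := eq_or_ne i j
    · exact congrArg Subtype.val ((f i).injective (Subtype.ext h))
    · exact absurd h (disjoint_iff_ne.1 (hT hij) _ (f i _).2 _ (f j _).2)
  rw [← Fintype.card_subtype]
  calc ∏ i, (#(T i)).descFactorial #{x | p x = i}
      = Fintype.card (∀ i, {x // p x = i} ↪ T i) := by
        simp [Fintype.card_embedding_eq, Fintype.card_subtype]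
    _ ≤ Fintype.card {φ : α ↪ β // ∀ x, φ x ∈ T (p x)} := by
        refine Fintype.card_le_of_injective
          (fun f => ⟨⟨_, glue_inj f⟩, fun x => (f (p x) ⟨x, rfl⟩).2⟩) fun f g h => ?_
        funext i
        ext ⟨x, rfl⟩
        exact congrArg (fun φ : {φ : α ↪ β // _} => φ.1 x) h

def threeParts (A B : Finset α) (x : α) : Fin 3 :=
  if x ∈ A then 0 else if x ∈ B then 1 else 2

lemma card_threeParts_fibers {A B : Finset α} (hAB : Disjoint A B) :
    #{x | threeParts A B x = 0} = #A ∧ #{x | threeParts A B x = 1} = #B ∧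
      #{x | threeParts A B x = 2} = Fintype.card α - #A - #B := by
  have key (x : α) : (threeParts A B x = 0 ↔ x ∈ A) ∧ (threeParts A B x = 1 ↔ x ∈ B) ∧
      (threeParts A B x = 2 ↔ x ∈ (A ∪ B)ᶜ) := by
    have := fun h : x ∈ A => disjoint_left.1 hAB h
    unfold threeParts
    split_ifs <;> simp_all
  refine ⟨?_, ?_, ?_⟩
  · exact congrArg card (ext fun x => by simp [(key x).1])
  · exact congrArg card (ext fun x => by simp [(key x).2.1])
  · rw [Nat.sub_sub, ← card_union_of_disjoint hAB, ← card_compl]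
    exact congrArg card (ext fun x => by simp only [mem_filter_univ, (key x).2.2])

lemma card_embedding_mapsTo_threeParts_le {A B : Finset α} (hAB : Disjoint A B)
    (T : Fin 3 → Finset β) :
    #{φ : α ↪ β | ∀ x, φ x ∈ T (threeParts A B x)} ≤
      (#(T 0)).descFactorial #A * (#(T 1)).descFactorial #B *
        (#(T 2)).descFactorial (Fintype.card α - #A - #B) := by
  obtain ⟨h0, h1, h2⟩ := card_threeParts_fibers hAB
  refine (card_embedding_mapsTo_le _ T).trans_eq ?_
  rw [Fin.prod_univ_three, h0, h1, h2]

lemma card_embedding_mapsTo_threeParts {A B : Finset α} (hAB : Disjoint A B)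
    (T : Fin 3 → Finset β) (hT : Pairwise (Disjoint on T)) :
    #{φ : α ↪ β | ∀ x, φ x ∈ T (threeParts A B x)} =
      (#(T 0)).descFactorial #A * (#(T 1)).descFactorial #B *
        (#(T 2)).descFactorial (Fintype.card α - #A - #B) := by
  obtain ⟨h0, h1, h2⟩ := card_threeParts_fibers hAB
  rw [card_embedding_mapsTo_of_pairwiseDisjoint _ T hT, Fin.prod_univ_three, h0, h1, h2]

end Embeddings

section MaximalIndepSubsets

variable {α : Type*} [Fintype α] (F : SimpleGraph α)

def boundary (S : Finset α) : Finset α := {z | z ∉ S ∧ ∃ x ∈ S, F.Adj z x}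

def IsMaxIndepSubset (S I : Finset α) : Prop :=
  Maximal (fun J : Finset α => J ⊆ S ∧ F.IsIndepSet (J : Set α)) I

def candidates (I : Finset α) : Finset (Finset α) :=
  insert (I ∪ boundary F I) ((boundary F I).image fun u => (I ∪ boundary F I).erase u)

variable {F}

lemma mem_boundary {S : Finset α} {z : α} :
    z ∈ boundary F S ↔ z ∉ S ∧ ∃ x ∈ S, F.Adj z x := by
  simp [boundary]

lemma disjoint_boundary (S : Finset α) : Disjoint S (boundary F S) :=
  disjoint_right.2 fun _ hz => (mem_boundary.1 hz).1

lemma mem_boundary_erase_union_boundary {I : Finset α} {u : α} (hu : u ∈ boundary F I) :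
    u ∈ boundary F ((I ∪ boundary F I).erase u) := by
  obtain ⟨huI, x, hx, hux⟩ := mem_boundary.1 hu
  exact mem_boundary.2 ⟨notMem_erase u _, x,
    mem_erase.2 ⟨ne_of_mem_of_not_mem hx huI, mem_union_left _ hx⟩, hux⟩

lemma IsMaxIndepSubset.subset_union_boundary {S I : Finset α} (h : IsMaxIndepSubset F S I) :
    S ⊆ I ∪ boundary F I := by
  intro z hzS
  by_cases hzI : z ∈ I
  · exact mem_union_left _ hzI
  by_contra hz
  have hnadj : ∀ y ∈ I, ¬ F.Adj z y := fun y hy hzy =>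
    hz (mem_union_right _ (mem_boundary.2 ⟨hzI, y, hy, hzy⟩))
  have hins : insert z I ⊆ S ∧ F.IsIndepSet ((insert z I : Finset α) : Set α) := by
    refine ⟨insert_subset hzS h.1.1, ?_⟩
    rw [coe_insert, SimpleGraph.IsIndepSet, Set.pairwise_insert]
    exact ⟨h.1.2, fun y hy _ => ⟨hnadj y hy, fun hyz => hnadj y hy hyz.symm⟩⟩
  exact hzI (h.2 hins (subset_insert z I) (mem_insert_self z I))

omit [Fintype α] in
lemma IsMaxIndepSubset.eq_of_isIndepSet {S I : Finset α} (h : IsMaxIndepSubset F S I)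
    (hS : F.IsIndepSet (S : Set α)) : I = S :=
  h.1.1.antisymm (h.2 ⟨subset_rfl, hS⟩ h.1.1)

lemma exists_isMaxIndepSubset_mem {S : Finset α} {w : α} (hw : w ∈ S) :
    ∃ I, IsMaxIndepSubset F S I ∧ w ∈ I := by
  obtain ⟨I, hwI, hI⟩ := Finite.exists_le_maximal
    (p := fun J : Finset α => J ⊆ S ∧ F.IsIndepSet (J : Set α))
    (a := {w}) ⟨singleton_subset_iff.2 hw, by simp⟩
  exact ⟨I, hI, singleton_subset_iff.1 hwI⟩

lemma exists_two_isMaxIndepSubset (S : Finset α) :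
    ∃ I₁ I₂, IsMaxIndepSubset F S I₁ ∧ IsMaxIndepSubset F S I₂ ∧
      (¬ F.IsIndepSet (S : Set α) → I₁ ≠ I₂) := by
  by_cases hS : F.IsIndepSet (S : Set α)
  · have hmax : IsMaxIndepSubset F S S := ⟨⟨subset_rfl, hS⟩, fun J hJ _ => hJ.1⟩
    exact ⟨S, S, hmax, hmax, fun h => absurd hS h⟩
  obtain ⟨p, hp, q, hq, -, hpq⟩ : ∃ p ∈ S, ∃ q ∈ S, p ≠ q ∧ F.Adj p q := by
    simpa [SimpleGraph.isIndepSet_iff, Set.Pairwise] using hS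
  obtain ⟨I₁, hI₁, hpI⟩ := exists_isMaxIndepSubset_mem (F := F) hp
  obtain ⟨I₂, hI₂, hqI⟩ := exists_isMaxIndepSubset_mem (F := F) hq
  refine ⟨I₁, I₂, hI₁, hI₂, fun _ heq => ?_⟩
  exact hI₁.1.2 (mem_coe.2 hpI) (mem_coe.2 (heq ▸ hqI)) hpq.ne hpq

lemma IsMaxIndepSubset.mem_candidates {S I : Finset α} (h : IsMaxIndepSubset F S I)
    (hS : #(boundary F S) ≤ 1) : S ∈ candidates F I := by
  set X := I ∪ boundary F I
  have hSX : S ⊆ X := h.subset_union_boundary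
  have hmissing : X \ S ⊆ boundary F I := fun z hz =>
    (mem_union.1 (mem_sdiff.1 hz).1).resolve_left fun hzI => (mem_sdiff.1 hz).2 (h.1.1 hzI)
  have hmissing' : X \ S ⊆ boundary F S := fun z hz => by
    obtain ⟨-, x, hx, hzx⟩ := mem_boundary.1 (hmissing hz)
    exact mem_boundary.2 ⟨(mem_sdiff.1 hz).2, x, h.1.1 hx, hzx⟩
  rcases (X \ S).eq_empty_or_nonempty with hempty | ⟨u, hu⟩
  · exact mem_insert.2 (Or.inl (hSX.antisymm (sdiff_eq_empty_iff_subset.1 hempty)))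
  refine mem_insert_of_mem (mem_image.2 ⟨u, hmissing hu, ext fun z => ⟨fun hz => ?_, fun hz => ?_⟩⟩)
  · obtain ⟨hzu, hzX⟩ := mem_erase.1 hz
    by_contra hzS
    exact hzu (card_le_one.1 ((card_le_card hmissing').trans hS) z
      (mem_sdiff.2 ⟨hzX, hzS⟩) u hu)
  · exact mem_erase.2 ⟨by rintro rfl; exact (mem_sdiff.1 hu).2 hz, hSX hz⟩

lemma candidates_erase_self_of_boundary_eq_empty {I : Finset α} (h : boundary F I = ∅) :
    (candidates F I).erase I = ∅ := by
  simp [candidates, h]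

lemma candidates_erase_self_of_boundary_eq_singleton {I : Finset α} {u : α}
    (h : boundary F I = {u}) : (candidates F I).erase I = {insert u I} := by
  have huI : u ∉ I := (mem_boundary.1 (h ▸ mem_singleton_self u)).1
  rw [candidates, h, union_comm, ← insert_eq, image_singleton, erase_insert huI,
    erase_insert_of_ne (ne_of_mem_of_not_mem' (mem_insert_self u I) huI), erase_singleton,
    insert_empty]

lemma sum_candidates_le (c : Finset α → ℕ) (I : Finset α) :
    ∑ S ∈ candidates F I, c S ≤
      c (I ∪ boundary F I) + ∑ u ∈ boundary F I, c ((I ∪ boundary F I).erase u) := by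
  rw [candidates]
  by_cases hmem : I ∪ boundary F I ∈ (boundary F I).image fun u => (I ∪ boundary F I).erase u
  · rw [insert_eq_of_mem hmem]
    exact (sum_image_le_of_nonneg fun _ _ => Nat.zero_le _).trans (Nat.le_add_left _ _)
  · rw [sum_insert hmem]
    exact Nat.add_le_add_left (sum_image_le_of_nonneg fun _ _ => Nat.zero_le _) _

lemma sum_charge_le {I₁ I₂ : Finset α → Finset α} (h₁ : ∀ S, IsMaxIndepSubset F S (I₁ S))
    (h₂ : ∀ S, IsMaxIndepSubset F S (I₂ S))
    (hne : ∀ S : Finset α, ¬ F.IsIndepSet (S : Set α) → I₁ S ≠ I₂ S)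
    (c : Finset α → ℕ) (hc : ∀ S, c S ≠ 0 → #(boundary F S) ≤ 1) (I : Finset α) :
    ∑ S : Finset α with I₁ S = I, c S + ∑ S : Finset α with I₂ S = I, c S ≤
      2 * c I + ∑ S ∈ (candidates F I).erase I, c S := by
  have hrhs : 2 * c I + ∑ S ∈ (candidates F I).erase I, c S =
      ∑ S, ((if S = I then 2 * c S else 0) + if S ∈ (candidates F I).erase I then c S else 0) := by
    rw [sum_add_distrib, sum_ite_eq' univ I, if_pos (mem_univ _), sum_ite_mem, univ_inter]
  rw [sum_filter, sum_filter, ← sum_add_distrib, hrhs]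
  refine sum_le_sum fun S _ => ?_
  by_cases hSI : S = I
  · subst hSI
    simp only [if_true, notMem_erase, if_false, add_zero]
    split_ifs <;> omega
  by_cases hcS : c S = 0
  · simp [hcS]
  have hcand {J} (hJ : IsMaxIndepSubset F S J) (hJI : J = I) : S ∈ (candidates F I).erase I :=
    mem_erase.2 ⟨hSI, hJI ▸ hJ.mem_candidates (hc S hcS)⟩
  have hnot_both : ¬ (I₁ S = I ∧ I₂ S = I) := fun ⟨e₁, e₂⟩ => by
    have hS : F.IsIndepSet (S : Set α) := by
      by_contra hS
      exact hne S hS (e₁.trans e₂.symm)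
    exact hSI (((h₁ S).eq_of_isIndepSet hS).symm.trans e₁)
  rw [if_neg hSI, zero_add]
  by_cases e₁ : I₁ S = I <;> by_cases e₂ : I₂ S = I
  · exact absurd ⟨e₁, e₂⟩ hnot_both
  · rw [if_pos e₁, if_neg e₂, if_pos (hcand (h₁ S) e₁), add_zero]
  · rw [if_neg e₁, if_pos e₂, if_pos (hcand (h₂ S) e₂), zero_add]
  · rw [if_neg e₁, if_neg e₂]
    exact Nat.zero_le _

end MaximalIndepSubsets

section TwoGraphs

variable {α β : Type*} [Fintype α] [Fintype β] {m d : ℕ}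

def copies (G : SimpleGraph β) (F : SimpleGraph α) : Finset (α ↪ β) :=
  {φ | ∀ x y, F.Adj x y → G.Adj (φ x) (φ y)}

lemma mem_copies {G : SimpleGraph β} {F : SimpleGraph α} {φ : α ↪ β} :
    φ ∈ copies G F ↔ ∀ x y, F.Adj x y → G.Adj (φ x) (φ y) := by
  simp [copies]

lemma labeledCopies_eq_card_copies (G : SimpleGraph β) (F : SimpleGraph α) :
    labeledCopies G F = #(copies G F) := by
  rw [labeledCopies, Nat.card_eq_fintype_card, Fintype.card_subtype, copies]

def topPreimage (m : ℕ) (φ : α ↪ Fin (m + d)) : Finset α := {x | m ≤ (φ x : ℕ)}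

lemma mem_topPreimage {φ : α ↪ Fin (m + d)} {x : α} :
    x ∈ topPreimage m φ ↔ m ≤ (φ x : ℕ) := by
  simp [topPreimage]

def copiesOver (m : ℕ) (G : SimpleGraph (Fin (m + d))) (F : SimpleGraph α) (S : Finset α) :
    Finset (α ↪ Fin (m + d)) :=
  {φ ∈ copies G F | topPreimage m φ = S}

lemma mem_copiesOver {G : SimpleGraph (Fin (m + d))} {F : SimpleGraph α} {S : Finset α}
    {φ : α ↪ Fin (m + d)} :
    φ ∈ copiesOver m G F S ↔ φ ∈ copies G F ∧ topPreimage m φ = S := by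
  simp [copiesOver]

lemma sum_card_copiesOver (G : SimpleGraph (Fin (m + d))) (F : SimpleGraph α) :
    ∑ S, #(copiesOver m G F S) = #(copies G F) :=
  (card_eq_sum_card_fiberwise fun _ _ => mem_univ _).symm

def verticesBelow (n k : ℕ) : Finset (Fin n) := {v | (v : ℕ) < k}

def verticesFrom (n k : ℕ) : Finset (Fin n) := {v | k ≤ (v : ℕ)}

@[simp] lemma mem_verticesBelow {n k : ℕ} {v : Fin n} :
    v ∈ verticesBelow n k ↔ (v : ℕ) < k := by
  simp [verticesBelow]

@[simp] lemma mem_verticesFrom {n k : ℕ} {v : Fin n} : v ∈ verticesFrom n k ↔ k ≤ (v : ℕ) := by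
  simp [verticesFrom]

lemma card_verticesBelow (n k : ℕ) : #(verticesBelow n k) = min n k :=
  Fin.card_filter_val_lt

lemma card_verticesFrom (m d : ℕ) : #(verticesFrom (m + d) m) = d := by
  have := card_filter_add_card_filter_not (s := (univ : Finset (Fin (m + d))))
    (fun v => (v : ℕ) < m)
  simp only [Fin.card_filter_val_lt, card_univ, Fintype.card_fin, not_lt] at this
  rw [verticesFrom]
  omega

lemma disjoint_verticesFrom_verticesBelow (n k : ℕ) :
    Disjoint (verticesFrom n k) (verticesBelow n k) :=
  disjoint_left.2 fun v hv hv' => by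
    rw [mem_verticesFrom] at hv; rw [mem_verticesBelow] at hv'; omega

lemma Knd'_adj_iff {a b : Fin (m + d)} :
    (Knd' (m + d) d).Adj a b ↔
      a ≠ b ∧ (((a : ℕ) < m ∧ (b : ℕ) < m) ∨ (m - 1 ≤ (a : ℕ) ∧ m - 1 ≤ (b : ℕ))) := by
  rw [Knd', SimpleGraph.fromRel_adj, Nat.add_sub_cancel]
  tauto

lemma Hnd_adj_iff {a b : Fin (m + d)} :
    (Hnd (m + d) d).Adj a b ↔ a ≠ b ∧ (((a : ℕ) < m ∧ (b : ℕ) < m) ∨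
      ((a : ℕ) < d ∧ m ≤ (b : ℕ)) ∨ ((b : ℕ) < d ∧ m ≤ (a : ℕ))) := by
  rw [Hnd, SimpleGraph.fromRel_adj, Nat.add_sub_cancel]
  tauto

variable {F : SimpleGraph α}

lemma card_copiesOver_le (G : SimpleGraph (Fin (m + d))) (S : Finset α) :
    #(copiesOver m G F S) ≤ d.descFactorial #S * m.descFactorial (Fintype.card α - #S) := by
  let T : Fin 3 → Finset (Fin (m + d)) := ![verticesFrom (m + d) m, ∅, verticesBelow (m + d) m]
  calc #(copiesOver m G F S)
      ≤ #{φ : α ↪ Fin (m + d) | ∀ x, φ x ∈ T (threeParts S ∅ x)} := by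
        refine card_le_card fun φ hφ => ?_
        obtain ⟨-, rfl⟩ := mem_copiesOver.1 hφ
        refine (mem_filter_univ _).2 fun x => ?_
        by_cases hx : m ≤ (φ x : ℕ) <;> simp [T, threeParts, mem_topPreimage, hx]
        omega
    _ ≤ _ := (card_embedding_mapsTo_threeParts_le (disjoint_empty_right S) T).trans_eq
        (by simp [T, card_verticesFrom, card_verticesBelow])

lemma Knd'_val_eq_of_mem_boundary {φ : α ↪ Fin (m + d)} (hφ : φ ∈ copies (Knd' (m + d) d) F)
    {z : α} (hz : z ∈ boundary F (topPreimage m φ)) : (φ z : ℕ) = m - 1 := by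
  obtain ⟨hzS, x, hxS, hzx⟩ := mem_boundary.1 hz
  have hadj := Knd'_adj_iff.1 (mem_copies.1 hφ z x hzx)
  rw [mem_topPreimage] at hzS hxS
  omega

lemma copiesOver_Knd'_eq_empty {S : Finset α} (hS : 1 < #(boundary F S)) :
    copiesOver m (Knd' (m + d) d) F S = ∅ := by
  refine eq_empty_of_forall_notMem fun φ hφ => ?_
  obtain ⟨hcopy, rfl⟩ := mem_copiesOver.1 hφ
  obtain ⟨z₁, hz₁, z₂, hz₂, hne⟩ := one_lt_card.1 hS
  exact hne (φ.injective (Fin.ext ((Knd'_val_eq_of_mem_boundary hcopy hz₁).trans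
    (Knd'_val_eq_of_mem_boundary hcopy hz₂).symm)))

lemma card_copiesOver_Knd'_le_of_mem_boundary {S : Finset α} {u : α}
    (hu : u ∈ boundary F S) :
    #(copiesOver m (Knd' (m + d) d) F S) ≤
      d.descFactorial #S * (m - 1).descFactorial (Fintype.card α - #S - 1) := by
  let T : Fin 3 → Finset (Fin (m + d)) :=
    ![verticesFrom (m + d) m, verticesFrom (m + d) (m - 1) ∩ verticesBelow (m + d) m,
      verticesBelow (m + d) (m - 1)]
  have huS : Disjoint S {u} := disjoint_singleton_right.2 (mem_boundary.1 hu).1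
  have hcut : #(T 1) ≤ 1 := card_le_one.2 fun a ha b hb => by
    simp only [T, Fin.isValue, Matrix.cons_val_one, Matrix.cons_val_zero, mem_inter,
      mem_verticesFrom, mem_verticesBelow] at ha hb
    exact Fin.ext (by omega)
  calc #(copiesOver m (Knd' (m + d) d) F S)
      ≤ #{φ : α ↪ Fin (m + d) | ∀ x, φ x ∈ T (threeParts S {u} x)} := by
        refine card_le_card fun φ hφ => ?_
        obtain ⟨hcopy, rfl⟩ := mem_copiesOver.1 hφ
        have hφu := Knd'_val_eq_of_mem_boundary hcopy hu
        refine (mem_filter_univ _).2 fun x => ?_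
        by_cases hx : m ≤ (φ x : ℕ)
        · simp [T, threeParts, mem_topPreimage, hx]
        by_cases hxu : x = u
        · subst hxu
          simp [T, threeParts, mem_topPreimage, hx]
          omega
        have : (φ x : ℕ) ≠ m - 1 := fun h => hxu (φ.injective (Fin.ext (h.trans hφu.symm)))
        simp [T, threeParts, mem_topPreimage, hx, hxu]
        omega
    _ ≤ _ := (card_embedding_mapsTo_threeParts_le huS T).trans ?_
  have h0 : #(T 0) = d := card_verticesFrom m d
  have h2 : #(T 2) = m - 1 := (card_verticesBelow _ _).trans (min_eq_right (by omega))
  rw [card_singleton, Nat.descFactorial_one, h0, h2]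
  simpa using Nat.mul_le_mul_right _ (Nat.mul_le_mul_left (d.descFactorial #S) hcut)

def placements (m : ℕ) (I K : Finset α) (Y : Finset (Fin (m + d))) :
    Finset (α ↪ Fin (m + d)) :=
  {φ | ∀ x, φ x ∈ ![verticesFrom (m + d) m, Y, verticesBelow (m + d) m \ Y] (threeParts I K x)}

lemma mem_placements {I K : Finset α} {Y : Finset (Fin (m + d))} {φ : α ↪ Fin (m + d)}
    (hIK : Disjoint I K) (hY : Y ⊆ verticesBelow (m + d) m) (hφ : φ ∈ placements m I K Y)
    (x : α) : (x ∈ I ↔ m ≤ (φ x : ℕ)) ∧ (x ∈ K → φ x ∈ Y) := by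
  have hx := (mem_filter_univ _).1 hφ x
  by_cases hxI : x ∈ I
  · have := disjoint_left.1 hIK hxI
    simp_all [threeParts]
  by_cases hxK : x ∈ K
  · have hxY : φ x ∈ Y := by simpa [threeParts, hxI, hxK] using hx
    have := mem_verticesBelow.1 (hY hxY)
    simp only [hxI, false_iff, not_le, hxY, implies_true, and_true]
    exact this
  · simp_all [threeParts]

lemma card_placements {I K : Finset α} {Y : Finset (Fin (m + d))} (hIK : Disjoint I K)
    (hY : Y ⊆ verticesBelow (m + d) m) :
    #(placements m I K Y) = d.descFactorial #I * (#Y).descFactorial #K *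
      (m - #Y).descFactorial (Fintype.card α - #I - #K) := by
  have hFB := disjoint_verticesFrom_verticesBelow (m + d) m
  have hT : Pairwise (Disjoint on ![verticesFrom (m + d) m, Y, verticesBelow (m + d) m \ Y]) := by
    intro i j hij
    fin_cases i <;> fin_cases j <;> simp only [onFun] at hij ⊢
    all_goals first
      | exact absurd rfl hij
      | exact hFB.mono_right hY | exact (hFB.mono_right hY).symm
      | exact hFB.mono_right sdiff_subset | exact (hFB.mono_right sdiff_subset).symm
      | exact disjoint_sdiff | exact disjoint_sdiff.symm
  rw [placements, card_embedding_mapsTo_threeParts hIK _ hT]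
  simp [card_verticesFrom, card_sdiff_of_subset hY, card_verticesBelow]

lemma placements_subset_copiesOver_Hnd {I : Finset α} (hI : F.IsIndepSet (I : Set α))
    {Y : Finset (Fin (m + d))} (hYd : Y ⊆ verticesBelow (m + d) d)
    (hY : Y ⊆ verticesBelow (m + d) m) :
    placements m I (boundary F I) Y ⊆ copiesOver m (Hnd (m + d) d) F I := by
  intro φ hφ
  have hφ' := mem_placements (disjoint_boundary I) hY hφ
  have hK {x : α} (hx : x ∉ I) (y : α) (hy : y ∈ I) (hxy : F.Adj x y) :
      (φ x : ℕ) < d ∧ m ≤ (φ y : ℕ) :=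
    ⟨mem_verticesBelow.1 (hYd ((hφ' x).2 (mem_boundary.2 ⟨hx, y, hy, hxy⟩))), (hφ' y).1.1 hy⟩
  refine mem_copiesOver.2 ⟨mem_copies.2 fun x y hxy => Hnd_adj_iff.2
    ⟨φ.injective.ne hxy.ne, ?_⟩, ext fun x => by rw [mem_topPreimage, (hφ' x).1]⟩
  by_cases hx : x ∈ I
  · exact Or.inr (Or.inr (hK (fun hy => hI hx hy hxy.ne hxy) x hx hxy.symm))
  by_cases hy : y ∈ I
  · exact Or.inr (Or.inl (hK hx y hy hxy))
  · exact Or.inl ⟨not_le.1 fun h => hx ((hφ' x).1.2 h), not_le.1 fun h => hy ((hφ' y).1.2 h)⟩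

lemma le_card_copiesOver_Hnd (hdm : d ≤ m) {I : Finset α} (hI : F.IsIndepSet (I : Set α)) :
    d.descFactorial #I * (d.descFactorial #(boundary F I) * (m - #(boundary F I)).descFactorial
      (Fintype.card α - #I - #(boundary F I))) ≤ #(copiesOver m (Hnd (m + d) d) F I) := by
  set K := boundary F I
  set 𝒴 := powersetCard #K (verticesBelow (m + d) d)
  have hIK : Disjoint I K := disjoint_boundary I
  have hYm {Y} (hY : Y ∈ 𝒴) : Y ⊆ verticesBelow (m + d) m := fun v hv =>
    mem_verticesBelow.2 ((mem_verticesBelow.1 ((mem_powersetCard.1 hY).1 hv)).trans_le hdm)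
  have himage {φ Y} (hY : Y ∈ 𝒴) (hφ : φ ∈ placements m I K Y) : K.map φ = Y :=
    eq_of_subset_of_card_le (map_subset_iff_subset_preimage.2 fun x hx =>
      mem_preimage.2 ((mem_placements hIK (hYm hY) hφ x).2 hx))
      (by rw [card_map, (mem_powersetCard.1 hY).2])
  have hdisj : (𝒴 : Set (Finset (Fin (m + d)))).PairwiseDisjoint (placements m I K) :=
    fun Y hY Y' hY' hne => disjoint_left.2 fun φ hφ hφ' =>
      hne ((himage hY hφ).symm.trans (himage hY' hφ'))
  calc d.descFactorial #I * (d.descFactorial #K *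
        (m - #K).descFactorial (Fintype.card α - #I - #K))
      = ∑ Y ∈ 𝒴, #(placements m I K Y) := by
        rw [sum_congr rfl fun Y hY => by rw [card_placements hIK (hYm hY),
          (mem_powersetCard.1 hY).2, Nat.descFactorial_self], sum_const, card_powersetCard,
          card_verticesBelow, min_eq_right (by omega),
          Nat.descFactorial_eq_factorial_mul_choose d #K, smul_eq_mul]
        ring
    _ = #(𝒴.biUnion (placements m I K)) := (card_biUnion hdisj).symm
    _ ≤ _ := card_le_card (biUnion_subset.2 fun Y hY =>
        placements_subset_copiesOver_Hnd hI (mem_powersetCard.1 hY).1 (hYm hY))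

end TwoGraphs

section Comparison

variable {α : Type*} [Fintype α] {F : SimpleGraph α} {m d : ℕ}

lemma charge_le_of_boundary_eq_empty (hdm : d ≤ m) {I : Finset α}
    (hI : F.IsIndepSet (I : Set α)) (hK : boundary F I = ∅) :
    2 * #(copiesOver m (Knd' (m + d) d) F I) +
        ∑ S ∈ (candidates F I).erase I, #(copiesOver m (Knd' (m + d) d) F S) ≤
      2 * #(copiesOver m (Hnd (m + d) d) F I) := by
  have hH := le_card_copiesOver_Hnd hdm hI
  have hKI := card_copiesOver_le (F := F) (Knd' (m + d) d) I
  rw [hK, card_empty] at hH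
  simp only [Nat.descFactorial_zero, one_mul, Nat.sub_zero] at hH
  rw [candidates_erase_self_of_boundary_eq_empty hK, sum_empty]
  omega

lemma charge_le_of_boundary_eq_singleton (hm : (2 * d + 1) * Fintype.card α ≤ m)
    (hdm : d ≤ m) {I : Finset α} (hI : F.IsIndepSet (I : Set α)) {u : α}
    (hK : boundary F I = {u}) :
    2 * #(copiesOver m (Knd' (m + d) d) F I) +
        ∑ S ∈ (candidates F I).erase I, #(copiesOver m (Knd' (m + d) d) F S) ≤
      2 * #(copiesOver m (Hnd (m + d) d) F I) := by
  have huK : u ∈ boundary F I := hK ▸ mem_singleton_self u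
  obtain ⟨huI, x, hx, -⟩ := mem_boundary.1 huK
  have hH := le_card_copiesOver_Hnd hdm hI
  have hKI := card_copiesOver_Knd'_le_of_mem_boundary (m := m) (d := d) huK
  have hKuI := card_copiesOver_le (F := F) (Knd' (m + d) d) (insert u I)
  rw [card_insert_of_notMem huI, Nat.sub_add_eq] at hKuI
  have := charge_arith_of_card_boundary_eq_one (card_pos.2 ⟨x, hx⟩)
    (le_trans (Nat.mul_le_mul_left _ (by omega : Fintype.card α - #I - 1 ≤ Fintype.card α)) hm)
  rw [hK, card_singleton] at hH
  rw [candidates_erase_self_of_boundary_eq_singleton hK, sum_singleton]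
  nlinarith

lemma charge_le_of_one_lt_card_boundary (hm : (2 * d + 1) * Fintype.card α ≤ m)
    (hdm : d ≤ m) {I : Finset α} (hI : F.IsIndepSet (I : Set α))
    (hK : 1 < #(boundary F I)) :
    2 * #(copiesOver m (Knd' (m + d) d) F I) +
        ∑ S ∈ (candidates F I).erase I, #(copiesOver m (Knd' (m + d) d) F S) ≤
      2 * #(copiesOver m (Hnd (m + d) d) F I) := by
  have hH := le_card_copiesOver_Hnd hdm hI
  set K := boundary F I
  have hIK : Disjoint I K := disjoint_boundary I
  have hIKt : #I + #K ≤ Fintype.card α := by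
    rw [← card_union_of_disjoint hIK]; exact card_le_univ _
  obtain ⟨u, hu⟩ := card_pos.1 (by omega : 0 < #K)
  obtain ⟨-, x, hx, -⟩ := mem_boundary.1 hu
  have hsum := (sum_le_sum_of_subset (f := fun S => #(copiesOver m (Knd' (m + d) d) F S))
    (erase_subset I (candidates F I))).trans (sum_candidates_le _ I)
  have hU := card_copiesOver_le (F := F) (Knd' (m + d) d) (I ∪ K)
  rw [card_union_of_disjoint hIK, ← Nat.sub_sub] at hU
  have hE : ∀ u ∈ K, #(copiesOver m (Knd' (m + d) d) F ((I ∪ K).erase u)) ≤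
      d.descFactorial (#I + #K - 1) * (m - 1).descFactorial (Fintype.card α - #I - #K) := by
    intro u hu
    have := card_copiesOver_Knd'_le_of_mem_boundary (m := m) (d := d)
      (mem_boundary_erase_union_boundary hu)
    rwa [card_erase_of_mem (mem_union_right _ hu), card_union_of_disjoint hIK,
      show Fintype.card α - (#I + #K - 1) - 1 = Fintype.card α - #I - #K by omega] at this
  have hEsum := sum_le_card_nsmul _ _ _ hE
  have := charge_arith_of_one_le_card_boundary (card_pos.2 ⟨x, hx⟩) (by omega : 1 ≤ #K)
    (le_trans (Nat.mul_le_mul_left _ (by omega : Fintype.card α - #I - #K ≤ Fintype.card α)) hm)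
  rw [copiesOver_Knd'_eq_empty hK, card_empty]
  rw [smul_eq_mul] at hEsum
  nlinarith

lemma charge_le (hm : (2 * d + 1) * Fintype.card α ≤ m) (hdm : d ≤ m) {I : Finset α}
    (hI : F.IsIndepSet (I : Set α)) :
    2 * #(copiesOver m (Knd' (m + d) d) F I) +
        ∑ S ∈ (candidates F I).erase I, #(copiesOver m (Knd' (m + d) d) F S) ≤
      2 * #(copiesOver m (Hnd (m + d) d) F I) := by
  rcases Nat.lt_or_ge 1 #(boundary F I) with hK | hK
  · exact charge_le_of_one_lt_card_boundary hm hdm hI hK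
  rcases (boundary F I).eq_empty_or_nonempty with h0 | ⟨u, hu⟩
  · exact charge_le_of_boundary_eq_empty hdm hI h0
  · exact charge_le_of_boundary_eq_singleton hm hdm hI
      (eq_singleton_iff_unique_mem.2 ⟨hu, fun v hv => card_le_one.1 hK v hv u hu⟩)

lemma card_copies_Knd'_le_card_copies_Hnd (hm : (2 * d + 1) * Fintype.card α ≤ m)
    (hdm : d ≤ m) : #(copies (Knd' (m + d) d) F) ≤ #(copies (Hnd (m + d) d) F) := by
  choose I₁ I₂ h₁ h₂ hne using exists_two_isMaxIndepSubset (F := F)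
  set cK := fun S => #(copiesOver m (Knd' (m + d) d) F S)
  have hc (S : Finset α) (hS : cK S ≠ 0) : #(boundary F S) ≤ 1 := by
    by_contra h
    exact hS (by simp [cK, copiesOver_Knd'_eq_empty (not_le.1 h)])
  have hzero {J : Finset α → Finset α} (hJ : ∀ S, IsMaxIndepSubset F S (J S)) {I : Finset α}
      (hI : ¬ F.IsIndepSet (I : Set α)) : ∑ S : Finset α with J S = I, cK S = 0 :=
    sum_eq_zero fun S hS => absurd ((mem_filter.1 hS).2 ▸ (hJ S).1.2) hI
  refine Nat.le_of_mul_le_mul_left ?_ two_pos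
  calc 2 * #(copies (Knd' (m + d) d) F)
      = ∑ I, (∑ S : Finset α with I₁ S = I, cK S + ∑ S : Finset α with I₂ S = I, cK S) := by
        rw [sum_add_distrib, sum_fiberwise, sum_fiberwise, ← two_mul, sum_card_copiesOver]
    _ ≤ ∑ I, 2 * #(copiesOver m (Hnd (m + d) d) F I) := by
        refine sum_le_sum fun I _ => ?_
        by_cases hI : F.IsIndepSet (I : Set α)
        · exact (sum_charge_le h₁ h₂ hne cK hc I).trans (charge_le hm hdm hI)
        · simp [hzero h₁ hI, hzero h₂ hI]
    _ = 2 * #(copies (Hnd (m + d) d) F) := by rw [← mul_sum, sum_card_copiesOver]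

end Comparison

end KndHnd

end

open KndHnd in
theorem Knd'_le_Hnd_labeled_copies_general (n d t : ℕ)
    (hn : 2 * d * t + d + t ≤ n) (F : SimpleGraph (Fin t)) :
    labeledCopies (Knd' n d) F ≤ labeledCopies (Hnd n d) F := by
  obtain ⟨m, rfl⟩ : ∃ m, n = m + d := ⟨n - d, by omega⟩
  rw [labeledCopies_eq_card_copies, labeledCopies_eq_card_copies]
  rcases Nat.eq_zero_or_pos t with rfl | ht
  · simp [copies]
  exact card_copies_Knd'_le_card_copies_Hnd (by rw [Fintype.card_fin]; linarith) (by nlinarith)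

theorem Knd'_le_Hnd_labeled_copies (n d t : ℕ) (ht : 3 ≤ t)
    (hn : 2 * d * t + d + t ≤ n) (F : SimpleGraph (Fin t)) :
    labeledCopies (Knd' n d) F ≤ labeledCopies (Hnd n d) F :=
  Knd'_le_Hnd_labeled_copies_general n d t hn F
end
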